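/- arXiv:2208.11966 — 9 statements merged into one kernel-verified Lean document; each statement's English description precedes it below -/
import Mathlib

section
/- Let Q be a finite quiver. The invariant ring ℛ^G is generated as a ℂ-algebra by the cycle monomials, i.e. ℛ^G equals the ℂ-subalgebra of ℛ generated by the elements x_p := ∏ (variables of the arrows of p), where p ranges over all paths of positive length in Q whose start vertex equals its end vertex. -/
/-!
Let `Q` be a finite quiver with vertices `V`, arrows `E`, tail map `t` and head map `h`.
`ℛ := ℂ[x_q : q ∈ E]`, with the torus `G = (ℂ*)^V` acting by `μ · x_q = μ_{t q}⁻¹ μ_{h q} x_q`.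

STATEMENT 1: the invariant ring `ℛ^G` is generated as a `ℂ`-algebra by the cycle monomials
`x_p` for `p` a path of positive length with equal start and end vertex.
-/

/-- The action of a torus element `μ` on the coordinate ring of the representation variety. -/
noncomputable def torusAct {V E : Type} (t h : E → V) (μ : V → ℂˣ) :
    MvPolynomial E ℂ →ₐ[ℂ] MvPolynomial E ℂ :=
  MvPolynomial.aeval fun q =>
    MvPolynomial.C ((μ (t q) : ℂ)⁻¹ * (μ (h q) : ℂ)) * MvPolynomial.X q

/-- The invariant subalgebra `ℛ^G`. -/
noncomputable def invAlg {V E : Type} (t h : E → V) :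
    Subalgebra ℂ (MvPolynomial E ℂ) where
  carrier := {f | ∀ μ : V → ℂˣ, torusAct t h μ f = f}
  mul_mem' := fun ha hb μ => by rw [map_mul, ha μ, hb μ]
  add_mem' := fun ha hb μ => by rw [map_add, ha μ, hb μ]
  algebraMap_mem' := fun c μ => (torusAct t h μ).commutes c

/-- The set of cycle monomials `x_p`, where `p` runs over all paths of positive length in `Q`
whose start vertex equals its end vertex: a path is a nonempty composable list of arrows
(head of each arrow = tail of the next), and being a cycle means the tail of the first arrow
equals the head of the last one. -/
def cycleMonomials {V E : Type} (t h : E → V) : Set (MvPolynomial E ℂ) :=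
  {f | ∃ qs : List E, qs ≠ [] ∧
    List.Chain' (fun p q => h p = t q) qs ∧
    (∃ q0 qn, qs.head? = some q0 ∧ qs.getLast? = some qn ∧ t q0 = h qn) ∧
    f = (qs.map MvPolynomial.X).prod}

/-!
The torus scales the monomial `x^d` by the character `μ ↦ ∏_q (μ_{h q} / μ_{t q})^{d q}`, so a
polynomial is invariant iff each of its monomials is, and (testing `μ = 2` at a single vertex,
`1` elsewhere) a monomial is invariant iff its multiset of arrows is balanced: every vertex is
the head of as many of its arrows as it is the tail of. Cycles are balanced. Conversely, a
nonempty balanced multiset of arrows contains a cycle: prolong a path inside it until its head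
vertex repeats one of its tail vertices, balancedness providing at each step an outgoing arrow
that the path has not used yet. Removing that cycle leaves a balanced multiset, so by induction
every invariant monomial is a product of cycle monomials.
-/

open MvPolynomial

theorem Finsupp.prod_pow_eq_prod_map_toMultiset {α M : Type*} [CommMonoid M] (d : α →₀ ℕ)
    (g : α → M) : (d.prod fun a n => g a ^ n) = (d.toMultiset.map g).prod := by
  rw [Finsupp.toMultiset_map, Finsupp.prod_toMultiset,
    Finsupp.prod_mapDomain_index pow_zero pow_add]

theorem Multiset.prod_map_mulSingle {α M : Type*} [DecidableEq α] [CommMonoid M]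
    (s : Multiset α) (a : α) (u : M) : (s.map (Pi.mulSingle a u)).prod = u ^ s.count a := by
  induction s using Multiset.induction with
  | empty => simp
  | cons b s ih =>
    rcases eq_or_ne b a with rfl | hb
    · simp [ih, pow_succ']
    · simp [ih, Pi.mulSingle_eq_of_ne hb, Multiset.count_cons_of_ne hb.symm]

theorem Multiset.eq_of_forall_prod_map_eq {α M : Type*} [CancelCommMonoid M] {u : M}
    (hu : ¬IsOfFinOrder u) {s₁ s₂ : Multiset α}
    (hs : ∀ μ : α → M, (s₁.map μ).prod = (s₂.map μ).prod) : s₁ = s₂ := by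
  classical
  ext a
  have hpow := hs (Pi.mulSingle a u)
  rw [prod_map_mulSingle, prod_map_mulSingle] at hpow
  exact (injective_pow_iff_not_isOfFinOrder (x := u)).mpr hu hpow

theorem MvPolynomial.monomial_one_eq_prod_map_X {σ R : Type*} [CommSemiring R] (d : σ →₀ ℕ) :
    monomial d (1 : R) = (d.toMultiset.map X).prod := by
  rw [← Finsupp.prod_pow_eq_prod_map_toMultiset, monomial_eq, C_1, one_mul]

namespace QuiverInvariants

variable {V E : Type} (t h : E → V)

noncomputable def torusWeight (μ : V → ℂˣ) (d : E →₀ ℕ) : ℂˣ :=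
  d.prod fun q n => ((μ (t q))⁻¹ * μ (h q)) ^ n

theorem torusAct_monomial (μ : V → ℂˣ) (d : E →₀ ℕ) (c : ℂ) :
    torusAct t h μ (monomial d c) = monomial d (torusWeight t h μ d * c) := by
  rw [torusAct, aeval_monomial, monomial_eq, torusWeight]
  simp only [Finsupp.prod, mul_pow, Finset.prod_mul_distrib, Units.val_mul, Units.coe_prod,
    Units.val_pow_eq_pow_val, Units.val_inv_eq_inv_val, map_mul, map_prod, map_pow, algebraMap_eq]
  ring

theorem coeff_torusAct (μ : V → ℂˣ) (f : MvPolynomial E ℂ) (d : E →₀ ℕ) :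
    coeff d (torusAct t h μ f) = torusWeight t h μ d * coeff d f := by
  classical
  induction f using MvPolynomial.induction_on' with
  | monomial d' c =>
    rw [torusAct_monomial, coeff_monomial, coeff_monomial]
    split_ifs with hd
    · rw [hd]
    · rw [mul_zero]
  | add f g hf hg => rw [map_add, coeff_add, coeff_add, hf, hg, mul_add]

theorem torusWeight_eq_div (μ : V → ℂˣ) (d : E →₀ ℕ) :
    torusWeight t h μ d =
      ((d.toMultiset.map h).map μ).prod / ((d.toMultiset.map t).map μ).prod := by
  rw [torusWeight, Finsupp.prod_pow_eq_prod_map_toMultiset, Multiset.prod_map_mul,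
    Multiset.prod_map_inv, Multiset.map_map, Multiset.map_map, div_eq_mul_inv, mul_comm]
  rfl

theorem forall_torusWeight_eq_one_iff (d : E →₀ ℕ) :
    (∀ μ, torusWeight t h μ d = 1) ↔ d.toMultiset.map h = d.toMultiset.map t := by
  have two_not_isOfFinOrder : ¬IsOfFinOrder (Units.mk0 (2 : ℂ) two_ne_zero) := fun h2 => by
    simpa using ((Units.coeHom ℂ).isOfFinOrder h2).norm_eq_one
  simp only [torusWeight_eq_div, div_eq_one]
  exact ⟨Multiset.eq_of_forall_prod_map_eq two_not_isOfFinOrder, fun hd μ => by rw [hd]⟩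

theorem mem_invAlg_iff (f : MvPolynomial E ℂ) :
    f ∈ invAlg t h ↔ ∀ d ∈ f.support, d.toMultiset.map h = d.toMultiset.map t := by
  simp only [← forall_torusWeight_eq_one_iff]
  constructor
  · intro hf d hd μ
    have hcoeff := congrArg (coeff d) (hf μ)
    rw [coeff_torusAct] at hcoeff
    exact Units.val_eq_one.mp
      (mul_right_cancel₀ (mem_support_iff.mp hd) (hcoeff.trans (one_mul _).symm))
  · intro hf μ
    ext d
    rw [coeff_torusAct]
    by_cases hd : d ∈ f.support
    · rw [hf d hd μ, Units.val_one, one_mul]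
    · rw [notMem_support_iff.mp hd, mul_zero]

theorem prod_map_X_mem_invAlg {m : Multiset E} (hm : m.map h = m.map t) :
    (m.map X).prod ∈ invAlg t h := by
  classical
  rw [← Multiset.toFinsupp_toMultiset m, ← monomial_one_eq_prod_map_X, mem_invAlg_iff]
  intro d hd
  rwa [Finset.mem_singleton.mp (support_monomial_subset hd), Multiset.toFinsupp_toMultiset]

def IsClosedPath (qs : List E) : Prop :=
  qs ≠ [] ∧ List.IsChain (fun p q => h p = t q) qs ∧
    ∃ q0 qn, qs.head? = some q0 ∧ qs.getLast? = some qn ∧ t q0 = h qn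

theorem mem_cycleMonomials_iff (f : MvPolynomial E ℂ) :
    f ∈ cycleMonomials t h ↔ ∃ qs, IsClosedPath t h qs ∧ f = (qs.map X).prod := by
  simp only [cycleMonomials, IsClosedPath, and_assoc]
  rfl

theorem map_head_eq_tail_map_tail_append : ∀ {qs : List E} {qn : E},
    List.IsChain (fun p q => h p = t q) qs → qs.getLast? = some qn →
      qs.map h = (qs.map t).tail ++ [h qn]
  | [], _, _, hn => by simp at hn
  | [q], _, _, hn => by simp_all
  | q :: r :: l, qn, hch, hn => by
    rw [List.isChain_cons_cons] at hch
    rw [List.getLast?_cons_cons] at hn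
    simp [map_head_eq_tail_map_tail_append hch.2 hn, hch.1]

theorem IsClosedPath.map_head_eq_map_tail {qs : List E} (hqs : IsClosedPath t h qs) :
    (qs : Multiset E).map h = (qs : Multiset E).map t := by
  obtain ⟨-, hch, q0, qn, h0, hn, hc⟩ := hqs
  obtain ⟨l, rfl⟩ : ∃ l, qs = q0 :: l := List.head?_eq_some_iff.mp h0
  rw [Multiset.map_coe, Multiset.map_coe, Multiset.coe_eq_coe,
    map_head_eq_tail_map_tail_append t h hch hn, ← hc]
  exact List.perm_append_singleton _ _

theorem exists_isClosedPath_le_of_isChain {m : Multiset E} (hm : m.map h = m.map t)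
    (p : List E) (hp : p ≠ []) (hch : List.IsChain (fun a b => h a = t b) p)
    (hle : (p : Multiset E) ≤ m) : ∃ cs, IsClosedPath t h cs ∧ (cs : Multiset E) ≤ m := by
  set qn := p.getLast hp
  by_cases hv : h qn ∈ p.map t
  · obtain ⟨q', hq', hq't⟩ := List.mem_map.mp hv
    obtain ⟨l₁, l₂, rfl⟩ := List.append_of_mem hq'
    refine ⟨q' :: l₂, ⟨List.cons_ne_nil _ _, (List.isChain_append.mp hch).2.1, q', qn, rfl, ?_,
      hq't⟩, le_trans (List.sublist_append_right l₁ _).subperm hle⟩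
    rw [← List.getLast?_append_cons l₁, List.getLast?_eq_getLast_of_ne_nil hp]
  · have hqn : h qn ∈ m.map t :=
      hm ▸ Multiset.mem_map_of_mem h (Multiset.mem_of_le hle (List.getLast_mem hp))
    obtain ⟨q, hqm, hqt⟩ := Multiset.mem_map.mp hqn
    have hqp : q ∉ p := fun hq => hv (hqt ▸ List.mem_map_of_mem hq)
    have hle' : ((p ++ [q] : List E) : Multiset E) ≤ m := by
      rw [Multiset.coe_eq_coe.mpr (List.perm_append_singleton q p), ← Multiset.cons_coe,
        Multiset.cons_le_of_notMem hqp]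
      exact ⟨hqm, hle⟩
    have hch' : List.IsChain (fun a b => h a = t b) (p ++ [q]) :=
      List.isChain_append.mpr ⟨hch, List.isChain_singleton q, fun a ha b hb => by
        rw [List.getLast?_eq_getLast_of_ne_nil hp, Option.mem_some_iff] at ha
        rw [List.head?_cons, Option.mem_some_iff] at hb
        rw [← ha, ← hb, hqt]⟩
    have : p.length < Multiset.card m := by
      simpa using Multiset.card_le_card hle'
    exact exists_isClosedPath_le_of_isChain hm (p ++ [q]) (by simp) hch' hle'
termination_by Multiset.card m - p.length

theorem exists_isClosedPath_le {m : Multiset E} (hm : m.map h = m.map t) (hne : m ≠ 0) :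
    ∃ cs, IsClosedPath t h cs ∧ (cs : Multiset E) ≤ m := by
  obtain ⟨q, hq⟩ := Multiset.exists_mem_of_ne_zero hne
  exact exists_isClosedPath_le_of_isChain t h hm [q] (List.cons_ne_nil _ _)
    (List.isChain_singleton q) (Multiset.singleton_le.mpr hq)

theorem prod_map_X_mem_adjoin_cycleMonomials {m : Multiset E} (hm : m.map h = m.map t) :
    (m.map X).prod ∈ Algebra.adjoin ℂ (cycleMonomials t h) := by
  rcases eq_or_ne m 0 with rfl | hne
  · simp
  obtain ⟨cs, hcs, hle⟩ := exists_isClosedPath_le t h hm hne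
  obtain ⟨r, rfl⟩ := Multiset.le_iff_exists_add.mp hle
  have hr : r.map h = r.map t := by
    rw [Multiset.map_add, Multiset.map_add, hcs.map_head_eq_map_tail] at hm
    exact add_left_cancel hm
  have : Multiset.card r < Multiset.card ((cs : Multiset E) + r) := by
    simpa [List.length_pos_iff] using hcs.1
  rw [Multiset.map_add, Multiset.prod_add]
  exact mul_mem (Algebra.subset_adjoin ((mem_cycleMonomials_iff t h _).mpr ⟨cs, hcs, by simp⟩))
    (prod_map_X_mem_adjoin_cycleMonomials hr)
termination_by Multiset.card m

end QuiverInvariants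

open QuiverInvariants in
theorem invariants_generated_by_cycles_general
    {V E : Type} (t h : E → V) :
    Algebra.adjoin ℂ (cycleMonomials t h) = invAlg t h := by
  refine le_antisymm (Algebra.adjoin_le fun f hf => ?_) fun f hf => ?_
  · obtain ⟨qs, hqs, rfl⟩ := (mem_cycleMonomials_iff t h f).mp hf
    simpa using prod_map_X_mem_invAlg t h hqs.map_head_eq_map_tail
  · rw [f.as_sum]
    refine Subalgebra.sum_mem _ fun d hd => ?_
    rw [← mul_one (coeff d f), ← smul_eq_mul, ← smul_monomial, monomial_one_eq_prod_map_X]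
    exact Subalgebra.smul_mem _
      (prod_map_X_mem_adjoin_cycleMonomials t h ((mem_invAlg_iff t h f).mp hf d hd)) _

theorem invariants_generated_by_cycles
    {V E : Type} [Fintype V] [Fintype E] (t h : E → V) :
    Algebra.adjoin ℂ (cycleMonomials t h) = invAlg t h :=
  invariants_generated_by_cycles_general t h
end

section
/- Set E := 𝗓_{0,0}·𝗓_{2,s_2}·𝗓_{3,s_3}⋯𝗓_{m+1,s_{m+1}} ∈ ℂ[𝗓]. Then for every variable 𝗓_{i,j} of ℂ[𝗓], the image of 𝗓_{i,j} in the localization of the quotient ring ℂ[𝗓]/QDet(𝗓) away from the class of E (i.e. in (ℂ[𝗓]/QDet(𝗓))[Ē^{−1}]) is a unit. -/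
open MvPolynomial

/-- Number of `j`-indices of the variables `𝗓_{i,j}` in row `i`: one variable `𝗓_{0,0}`
for `i = 0`, one variable `𝗓_{m+1,0}` for `i = m+1`, and `s_i + 1` variables
`𝗓_{i,0},…,𝗓_{i,s_i}` for `1 ≤ i ≤ m`. -/
def nj (m : ℕ) (s : ℕ → ℕ) (i : ℕ) : ℕ := if i = 0 ∨ i = m + 1 then 1 else s i + 1

/-- The index type of the variables of the polynomial ring `ℂ[𝗓]`. -/
abbrev ZIdx (m : ℕ) (s : ℕ → ℕ) : Type := Σ i : Fin (m + 2), Fin (nj m s i.val)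

/-- The variable index `(i,j)` (with a junk value for out-of-range indices). -/
def zidx (m : ℕ) (s : ℕ → ℕ) (i j : ℕ) : ZIdx m s :=
  if h : i < m + 2 ∧ j < nj m s i then ⟨⟨i, h.1⟩, ⟨j, h.2⟩⟩
  else ⟨⟨0, by omega⟩, ⟨0, by simp [nj]⟩⟩

/-- The polynomial ring `ℂ[𝗓]`. -/
abbrev CZ (m : ℕ) (s : ℕ → ℕ) : Type := MvPolynomial (ZIdx m s) ℂ

/-- The variable `𝗓_{i,j}`. -/
noncomputable def Zv (m : ℕ) (s : ℕ → ℕ) (i j : ℕ) : CZ m s := X (zidx m s i j)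

/-- `W_t = 𝗓_{t,1}·𝗓_{t,2}⋯𝗓_{t,s_t−1}`. -/
noncomputable def Wq (m : ℕ) (s : ℕ → ℕ) (t : ℕ) : CZ m s :=
  ∏ u ∈ Finset.Icc 1 (s t - 1), Zv m s t u

/-- The quasiminor `q_{i,j} = 𝗓_{i−1,0}·𝗓_{j,s_j} − 𝗓_{i,s_i}·(∏_{t=i}^{j−1} W_t)·𝗓_{j−1,0}`. -/
noncomputable def qm (m : ℕ) (s : ℕ → ℕ) (i j : ℕ) : CZ m s :=
  Zv m s (i - 1) 0 * Zv m s j (s j)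
    - Zv m s i (s i) * (∏ t ∈ Finset.Icc i (j - 1), Wq m s t) * Zv m s (j - 1) 0

/-- The quasideterminantal ideal `QDet(𝗓)`, generated by the quasiminors `q_{i,j}`
for `1 ≤ i < j ≤ m+1`. -/
noncomputable def QDet (m : ℕ) (s : ℕ → ℕ) : Ideal (CZ m s) :=
  Ideal.span {q | ∃ i j : ℕ, 1 ≤ i ∧ i < j ∧ j ≤ m + 1 ∧ q = qm m s i j}

/-- `s_t = β_t − 1` for `1 ≤ t ≤ m` and `s_{m+1} = 0`. -/
def sfun (m : ℕ) (β : ℕ → ℕ) (t : ℕ) : ℕ := if t ≤ m then β t - 1 else 0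

/-- `E = 𝗓_{0,0}·𝗓_{2,s_2}·𝗓_{3,s_3}⋯𝗓_{m+1,s_{m+1}}`. -/
noncomputable def Emon (m : ℕ) (s : ℕ → ℕ) : CZ m s :=
  Zv m s 0 0 * ∏ t ∈ Finset.Icc 2 (m + 1), Zv m s t (s t)

/-!
Every factor of `E` becomes a unit. The quasiminors `q_{1,j}` then give
`𝗓_{0,0}·𝗓_{j,s_j} = 𝗓_{1,s_1}·W_1⋯W_{j-1}·𝗓_{j-1,0}` with a unit on the left for `2 ≤ j ≤ m+1`,
so every factor on the right is a unit too. For `j = m+1` and `j` ranging over `2,…,m+1` this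
covers `𝗓_{1,s_1}`, all `𝗓_{t,u}` with `0 < u < s_t`, and all `𝗓_{i,0}`; the remaining variables
`𝗓_{t,s_t}` with `t ≥ 2` are factors of `E`, where `𝗓_{m+1,0} = 𝗓_{m+1,s_{m+1}}`.
-/

lemma X_eq_Zv {m : ℕ} {s : ℕ → ℕ} (p : ZIdx m s) : X p = Zv m s p.1 p.2 := by
  obtain ⟨⟨i, hi⟩, ⟨j, hj⟩⟩ := p
  rw [Zv, zidx, dif_pos ⟨hi, hj⟩]

section RingHom

variable {m : ℕ} {s : ℕ → ℕ} {L : Type*} [CommRing L] (F : CZ m s →+* L)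

lemma isUnit_map_Zv_of_isUnit_map_Emon (hE : IsUnit (F (Emon m s))) :
    IsUnit (F (Zv m s 0 0)) ∧ ∀ t ∈ Finset.Icc 2 (m + 1), IsUnit (F (Zv m s t (s t))) := by
  simpa only [Emon, map_mul, map_prod, IsUnit.mul_iff, IsUnit.prod_iff] using hE

lemma isUnit_map_factors_of_map_qm_one_eq_zero (hE : IsUnit (F (Emon m s)))
    {j : ℕ} (hj : j ∈ Finset.Icc 2 (m + 1)) (hq : F (qm m s 1 j) = 0) :
    IsUnit (F (Zv m s 1 (s 1))) ∧ (∀ t ∈ Finset.Icc 1 (j - 1), IsUnit (F (Wq m s t))) ∧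
      IsUnit (F (Zv m s (j - 1) 0)) := by
  obtain ⟨h00, hts⟩ := isUnit_map_Zv_of_isUnit_map_Emon F hE
  have hlhs : IsUnit (F (Zv m s 0 0 * Zv m s j (s j))) := by
    rw [map_mul]
    exact h00.mul (hts j hj)
  rw [qm, map_sub, sub_eq_zero] at hq
  rw [hq] at hlhs
  simpa only [map_mul, map_prod, IsUnit.mul_iff, IsUnit.prod_iff, and_assoc] using hlhs

theorem isUnit_map_X_of_isUnit_map_Emon (hm : 1 ≤ m) (hs : s (m + 1) = 0)
    (hq : ∀ j ∈ Finset.Icc 2 (m + 1), F (qm m s 1 j) = 0)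
    (hE : IsUnit (F (Emon m s))) (p : ZIdx m s) :
    IsUnit (F (X p)) := by
  obtain ⟨h00, hts⟩ := isUnit_map_Zv_of_isUnit_map_Emon F hE
  have hfactors (j : ℕ) (hj : j ∈ Finset.Icc 2 (m + 1)) :=
    isUnit_map_factors_of_map_qm_one_eq_zero F hE hj (hq j hj)
  obtain ⟨h1s, hW, -⟩ := hfactors (m + 1) (by simp [hm])
  obtain ⟨⟨i, hi⟩, ⟨j, hj⟩⟩ := p
  rw [X_eq_Zv]
  simp only [nj] at hj
  split_ifs at hj with hrow
  · obtain rfl : j = 0 := by omega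
    rcases hrow with rfl | rfl
    · exact h00
    · simpa [hs] using hts (m + 1) (by simp [hm])
  rcases Nat.eq_zero_or_pos j with rfl | hj0
  · simpa using (hfactors (i + 1) (Finset.mem_Icc.mpr ⟨by omega, by omega⟩)).2.2
  rcases Nat.lt_or_ge j (s i) with hjs | hjs
  · have hWi := hW i (Finset.mem_Icc.mpr ⟨by omega, by omega⟩)
    rw [Wq, map_prod, IsUnit.prod_iff] at hWi
    exact hWi j (Finset.mem_Icc.mpr ⟨hj0, by omega⟩)
  obtain rfl : j = s i := by omega
  rcases Nat.lt_or_ge 1 i with hi1 | hi1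
  · exact hts i (Finset.mem_Icc.mpr ⟨hi1, by omega⟩)
  · obtain rfl : i = 1 := by omega
    exact h1s

end RingHom

theorem variables_unit_in_localization_away_E_general
    (m : ℕ) (hm : 1 ≤ m) (β : ℕ → ℕ) :
    ∀ p : ZIdx m (sfun m β),
      IsUnit (algebraMap (CZ m (sfun m β) ⧸ QDet m (sfun m β))
        (Localization.Away
          ((Ideal.Quotient.mk (QDet m (sfun m β))) (Emon m (sfun m β))))
        ((Ideal.Quotient.mk (QDet m (sfun m β))) (X p))) := by
  set I := QDet m (sfun m β)
  let F := (algebraMap _ (Localization.Away (Ideal.Quotient.mk I (Emon m (sfun m β))))).comp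
    (Ideal.Quotient.mk I)
  refine isUnit_map_X_of_isUnit_map_Emon F hm (by simp [sfun]) ?_
    (IsLocalization.Away.algebraMap_isUnit (Ideal.Quotient.mk I (Emon m (sfun m β))))
  intro j hj
  have hmem : qm m (sfun m β) 1 j ∈ I :=
    Ideal.subset_span ⟨1, j, le_rfl, (Finset.mem_Icc.mp hj).1, (Finset.mem_Icc.mp hj).2, rfl⟩
  simp [F, Ideal.Quotient.eq_zero_iff_mem.mpr hmem]

/-- every variable `𝗓_{i,j}` becomes a unit in the localization
`(ℂ[𝗓]/QDet(𝗓))[Ē⁻¹]` of the quotient ring away from the class `Ē` of `E`. -/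
theorem variables_unit_in_localization_away_E
    (m : ℕ) (hm : 1 ≤ m) (β : ℕ → ℕ) (hβ : ∀ t, 1 ≤ t → t ≤ m → 2 ≤ β t) :
    ∀ p : ZIdx m (sfun m β),
      IsUnit (algebraMap (CZ m (sfun m β) ⧸ QDet m (sfun m β))
        (Localization.Away
          ((Ideal.Quotient.mk (QDet m (sfun m β))) (Emon m (sfun m β))))
        ((Ideal.Quotient.mk (QDet m (sfun m β))) (X p))) :=
  variables_unit_in_localization_away_E_general m hm β
end

section
/- Let P be the product of all the variables of ℂ[𝗓] and let E := 𝗓_{0,0}·𝗓_{2,s_2}·𝗓_{3,s_3}⋯𝗓_{m+1,s_{m+1}}. Then the saturations agree: for every f ∈ ℂ[𝗓], there exists N ∈ ℕ with P^N·f ∈ QDet(𝗓) if and only if there exists N ∈ ℕ with E^N·f ∈ QDet(𝗓); i.e. (QDet(𝗓) : P^∞) = (QDet(𝗓) : E^∞). -/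
open MvPolynomial

open Finset

/-!
Saturating at `P` or at `E` gives the same ideal as soon as each of `P`, `E` divides a power of
the other modulo `QDet(𝗓)`. Since `E` is a product of distinct variables, `E ∣ P`. Conversely
every variable divides `E` modulo `QDet(𝗓)`: the factors of `E` trivially, and every other
`𝗓_{i,j}` divides the second term `𝗓_{1,s_1}·W_1⋯W_i·𝗓_{i,0}` of the quasiminor `q_{1,i+1}`,
whose first term `𝗓_{0,0}·𝗓_{i+1,s_{i+1}}` divides `E`. Hence `P ∣ E ^ #vars` modulo `QDet(𝗓)`.
-/

theorem Ideal.exists_pow_mul_mem_of_mk_dvd_mk_pow {R : Type*} [CommRing R] {I : Ideal R}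
    {a b : R} (k : ℕ) (hab : Ideal.Quotient.mk I a ∣ Ideal.Quotient.mk I b ^ k) (f : R) :
    (∃ N : ℕ, a ^ N * f ∈ I) → ∃ N : ℕ, b ^ N * f ∈ I := by
  rintro ⟨N, hN⟩
  obtain ⟨c, hc⟩ := hab
  refine ⟨k * N, ?_⟩
  rw [← Ideal.Quotient.eq_zero_iff_mem, map_mul, map_pow] at hN ⊢
  rw [pow_mul, hc, mul_pow, mul_right_comm, hN, zero_mul]

section QuasideterminantalIdeal

variable {m : ℕ} {s : ℕ → ℕ}

theorem zidx_of_lt (i j : ℕ) (hi : i < m + 2) (hj : j < nj m s i) :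
    zidx m s i j = ⟨⟨i, hi⟩, ⟨j, hj⟩⟩ := by
  rw [zidx, dif_pos ⟨hi, hj⟩]

theorem qm_mem_QDet {i j : ℕ} (hi : 1 ≤ i) (hij : i < j) (hj : j ≤ m + 1) :
    qm m s i j ∈ QDet m s :=
  Ideal.subset_span ⟨i, j, hi, hij, hj, rfl⟩

theorem Zv_zero_zero_dvd_Emon : Zv m s 0 0 ∣ Emon m s :=
  dvd_mul_right _ _

theorem Zv_dvd_Emon {t : ℕ} (ht : t ∈ Icc 2 (m + 1)) : Zv m s t (s t) ∣ Emon m s :=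
  (dvd_prod_of_mem _ ht).mul_left _

theorem mk_quasiminor_tail_dvd_mk_Emon {i : ℕ} (hi : 1 ≤ i) (him : i ≤ m) :
    Ideal.Quotient.mk (QDet m s) (Zv m s 1 (s 1) * (∏ t ∈ Icc 1 i, Wq m s t) * Zv m s i 0) ∣
      Ideal.Quotient.mk (QDet m s) (Emon m s) := by
  have hq := qm_mem_QDet (s := s) le_rfl (show 1 < i + 1 by omega) (show i + 1 ≤ m + 1 by omega)
  rw [qm, Nat.add_sub_cancel, Nat.sub_self, ← Ideal.Quotient.eq] at hq
  rw [← hq]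
  exact map_dvd _ (mul_dvd_mul_left _ (dvd_prod_of_mem _ (mem_Icc.mpr ⟨by omega, by omega⟩)))

theorem Zv_dvd_quasiminor_tail {i j : ℕ} (hi : 1 ≤ i) (hj : j ≤ s i) (htop : j = s i → i = 1) :
    Zv m s i j ∣ Zv m s 1 (s 1) * (∏ t ∈ Icc 1 i, Wq m s t) * Zv m s i 0 := by
  rcases Nat.eq_zero_or_pos j with rfl | hj0
  · exact dvd_mul_left _ _
  rcases hj.eq_or_lt with rfl | hjs
  · obtain rfl := htop rfl
    exact (dvd_mul_right _ _).mul_right _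
  have hWq : Zv m s i j ∣ Wq m s i := dvd_prod_of_mem _ (mem_Icc.mpr ⟨hj0, by omega⟩)
  exact ((hWq.trans (dvd_prod_of_mem _ (mem_Icc.mpr ⟨hi, le_rfl⟩))).mul_left _).mul_right _

theorem mk_X_dvd_mk_Emon (hm : 1 ≤ m) (hs : s (m + 1) = 0) (p : ZIdx m s) :
    Ideal.Quotient.mk (QDet m s) (X p) ∣ Ideal.Quotient.mk (QDet m s) (Emon m s) := by
  obtain ⟨⟨i, hi⟩, ⟨j, hj⟩⟩ := p
  have hX : X ⟨⟨i, hi⟩, ⟨j, hj⟩⟩ = Zv m s i j := by rw [Zv, zidx_of_lt]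
  rw [hX]
  by_cases hi0 : i = 0
  · subst hi0
    obtain rfl : j = 0 := by simpa [nj] using hj
    exact map_dvd _ Zv_zero_zero_dvd_Emon
  by_cases hilast : i = m + 1
  · subst hilast
    obtain rfl : j = s (m + 1) := by simp [nj, hs] at hj ⊢; omega
    exact map_dvd _ (Zv_dvd_Emon (mem_Icc.mpr ⟨by omega, le_rfl⟩))
  have hjs : j ≤ s i := by simp [nj, hi0, hilast] at hj; omega
  by_cases htop : j = s i ∧ 2 ≤ i
  · obtain ⟨rfl, hi2⟩ := htop
    exact map_dvd _ (Zv_dvd_Emon (mem_Icc.mpr ⟨hi2, by omega⟩))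
  exact (map_dvd _ (Zv_dvd_quasiminor_tail (by omega) hjs (by omega))).trans
    (mk_quasiminor_tail_dvd_mk_Emon (by omega) (by omega))

theorem mk_prod_X_dvd_mk_Emon_pow (hm : 1 ≤ m) (hs : s (m + 1) = 0) :
    Ideal.Quotient.mk (QDet m s) (∏ p : ZIdx m s, X p) ∣
      Ideal.Quotient.mk (QDet m s) (Emon m s) ^ Fintype.card (ZIdx m s) := by
  rw [map_prod, ← card_univ, ← prod_const]
  exact prod_dvd_prod_of_dvd _ _ fun p _ => mk_X_dvd_mk_Emon hm hs p

theorem zidx_fst_of_mem_Icc (hs : s (m + 1) = 0) {t : ℕ} (ht : t ∈ Icc 2 (m + 1)) :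
    ((zidx m s t (s t)).1 : ℕ) = t := by
  rw [mem_Icc] at ht
  have hst : s t < nj m s t := by
    rcases ht.2.eq_or_lt with rfl | ht'
    · simp [nj, hs]
    · simp only [nj]; split_ifs <;> omega
  rw [zidx_of_lt t (s t) (by omega) hst]

theorem Emon_eq_prod_X (hs : s (m + 1) = 0) :
    Emon m s = ∏ p ∈ insert (zidx m s 0 0) ((Icc 2 (m + 1)).image fun t => zidx m s t (s t)),
      X p := by
  have hinj : Set.InjOn (fun t => zidx m s t (s t)) (Icc 2 (m + 1)) := fun x hx y hy hxy => by
    rw [← zidx_fst_of_mem_Icc hs hx, ← zidx_fst_of_mem_Icc hs hy]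
    exact congrArg (fun p : ZIdx m s => (p.1 : ℕ)) hxy
  have h00 : zidx m s 0 0 ∉ (Icc 2 (m + 1)).image fun t => zidx m s t (s t) := by
    simp only [mem_image, not_exists, not_and]
    intro t ht heq
    have hfst := zidx_fst_of_mem_Icc hs ht
    rw [heq, zidx_of_lt 0 0 (by omega) (by simp [nj])] at hfst
    have ht2 := (mem_Icc.mp ht).1
    simp only at hfst
    omega
  rw [prod_insert h00, prod_image hinj, Emon]
  rfl

theorem Emon_dvd_prod_X (hs : s (m + 1) = 0) : Emon m s ∣ ∏ p : ZIdx m s, X p := by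
  rw [Emon_eq_prod_X hs]
  exact prod_dvd_prod_of_subset _ _ _ (subset_univ _)

end QuasideterminantalIdeal

theorem saturation_P_eq_saturation_E_general
    (m : ℕ) (hm : 1 ≤ m) (β : ℕ → ℕ) :
    ∀ f : CZ m (sfun m β),
      (∃ N : ℕ, (∏ p : ZIdx m (sfun m β), X p) ^ N * f ∈ QDet m (sfun m β)) ↔
      (∃ N : ℕ, (Emon m (sfun m β)) ^ N * f ∈ QDet m (sfun m β)) := by
  intro f
  have hs : sfun m β (m + 1) = 0 := by simp [sfun]
  exact ⟨Ideal.exists_pow_mul_mem_of_mk_dvd_mk_pow _ (mk_prod_X_dvd_mk_Emon_pow hm hs) f,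
    Ideal.exists_pow_mul_mem_of_mk_dvd_mk_pow 1
      (by rw [pow_one]; exact map_dvd _ (Emon_dvd_prod_X hs)) f⟩

/-- with `P` the product of all the variables of `ℂ[𝗓]` and
`E = 𝗓_{0,0}·𝗓_{2,s_2}⋯𝗓_{m+1,s_{m+1}}`, the saturations of `QDet(𝗓)` at `P` and at `E`
agree: `(QDet(𝗓) : P^∞) = (QDet(𝗓) : E^∞)`. -/
theorem saturation_P_eq_saturation_E
    (m : ℕ) (hm : 1 ≤ m) (β : ℕ → ℕ) (hβ : ∀ t, 1 ≤ t → t ≤ m → 2 ≤ β t) :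
    ∀ f : CZ m (sfun m β),
      (∃ N : ℕ, (∏ p : ZIdx m (sfun m β), X p) ^ N * f ∈ QDet m (sfun m β)) ↔
      (∃ N : ℕ, (Emon m (sfun m β)) ^ N * f ∈ QDet m (sfun m β)) :=
  saturation_P_eq_saturation_E_general m hm β
end

section
/- With the weight w_i := 𝕚_i + 𝕛_i attached to every variable 𝗓_{i,j} (independent of j), each quasiminor q_{i,j} (1 ≤ i < j ≤ m+1) is weighted homogeneous of degree w_{i−1} + w_j; in particular QDet(𝗓) is a weighted-homogeneous ideal. Equivalently, for all 1 ≤ i < j ≤ m+1 the numerical identity w_{i−1} + w_j = w_i + w_{j−1} + Σ_{t=i}^{j−1}(β_t − 2)·w_t holds. -/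
open MvPolynomial

/-- Hirzebruch–Jung continued fraction `[γ_1,…,γ_s] = γ_1 − 1/(γ_2 − 1/(⋯ − 1/γ_s))`
(with the Mathlib convention `1/0 = 0`, so that `hjcf [γ] = γ`). -/
def hjcf : List ℚ → ℚ
  | [] => 0
  | g :: rest => g - 1 / hjcf rest

/-- The pair `(𝕚_t, 𝕚_{t+1})` of the `𝕚`-series: `𝕚_0 = r`, `𝕚_1 = r − a`,
`𝕚_{t+1} = β_t·𝕚_t − 𝕚_{t−1}`. -/
def ipair (r a : ℕ) (β : ℕ → ℕ) : ℕ → ℤ × ℤ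
  | 0 => ((r : ℤ), (r : ℤ) - (a : ℤ))
  | t + 1 => ((ipair r a β t).2, (β (t + 1) : ℤ) * (ipair r a β t).2 - (ipair r a β t).1)

/-- The pair `(𝕛_t, 𝕛_{t+1})` of the `𝕛`-series: `𝕛_0 = 0`, `𝕛_1 = 1`,
`𝕛_{t+1} = β_t·𝕛_t − 𝕛_{t−1}`. -/
def jpair (β : ℕ → ℕ) : ℕ → ℤ × ℤ
  | 0 => (0, 1)
  | t + 1 => ((jpair β t).2, (β (t + 1) : ℤ) * (jpair β t).2 - (jpair β t).1)

/-- The weight `w_t = 𝕚_t + 𝕛_t`. -/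
def wdeg (r a : ℕ) (β : ℕ → ℕ) (t : ℕ) : ℤ := (ipair r a β t).1 + (jpair β t).1

/-!
Both parts come from the three-term recurrence `w_{t+1} + w_{t-1} = β_t w_t`, which the weights
inherit from `𝕚` and `𝕛`. It makes `(β_t - 2) w_t` the second difference of `w` at `t`, so the
sum `Σ_{t=i}^{j-1} (β_t - 2) w_t` telescopes to `w_{i-1} + w_j - w_i - w_{j-1}`. Since `W_t` is
a product of `s_t - 1 = β_t - 2` variables of weight `w_t`, this is exactly the statement that
both monomials of `q_{i,j}` have weight `w_{i-1} + w_j`.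
-/

open Finset

theorem sum_Icc_second_difference (w b : ℕ → ℤ)
    (hw : ∀ t, 1 ≤ t → w (t + 1) + w (t - 1) = b t * w t)
    {i j : ℕ} (hi : 1 ≤ i) (hij : i < j) :
    w (i - 1) + w j = w i + w (j - 1) + ∑ t ∈ Icc i (j - 1), (b t - 2) * w t := by
  induction j, hij using Nat.le_induction with
  | base =>
    rw [Nat.succ_sub_one, Icc_self, sum_singleton]
    linarith [hw i hi]
  | succ j hij ih =>
    obtain ⟨k, rfl⟩ : ∃ k, j = k + 1 := ⟨j - 1, by omega⟩
    rw [Nat.add_sub_cancel, sum_Icc_succ_top (by omega)]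
    have hrec := hw (k + 1) (by omega)
    rw [Nat.add_sub_cancel] at ih hrec
    linarith

theorem wdeg_succ_add_pred (r a : ℕ) (β : ℕ → ℕ) {t : ℕ} (ht : 1 ≤ t) :
    wdeg r a β (t + 1) + wdeg r a β (t - 1) = β t * wdeg r a β t := by
  obtain ⟨t, rfl⟩ : ∃ k, t = k + 1 := ⟨t - 1, by omega⟩
  simp only [wdeg, ipair, jpair, Nat.add_sub_cancel]
  ring

section Homogeneity

variable (m : ℕ) (s : ℕ → ℕ) {M : Type*} [AddCommMonoid M] (w : ℕ → M)

theorem nj_pos (i : ℕ) : 0 < nj m s i := by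
  unfold nj
  split <;> omega

theorem nj_of_mem_Icc {i : ℕ} (hi : i ∈ Icc 1 m) : nj m s i = s i + 1 := by
  rw [mem_Icc] at hi
  exact if_neg (by omega)

theorem isWeightedHomogeneous_Zv {i j : ℕ} (hi : i < m + 2) (hj : j < nj m s i) :
    IsWeightedHomogeneous (fun p : ZIdx m s => w p.1.val) (Zv m s i j) (w i) := by
  rw [Zv, zidx, dif_pos ⟨hi, hj⟩]
  exact isWeightedHomogeneous_X ℂ _ _

theorem isWeightedHomogeneous_Wq {t : ℕ} (ht : t ∈ Icc 1 m) :
    IsWeightedHomogeneous (fun p : ZIdx m s => w p.1.val) (Wq m s t) ((s t - 1) • w t) := by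
  have hdeg : (s t - 1) • w t = ∑ _u ∈ Icc 1 (s t - 1), w t := by
    rw [sum_const, Nat.card_Icc, Nat.add_sub_cancel]
  rw [hdeg, Wq]
  refine IsWeightedHomogeneous.prod _ _ _ fun u hu => ?_
  rw [mem_Icc] at ht hu
  exact isWeightedHomogeneous_Zv m s w (by omega)
    (by rw [nj_of_mem_Icc m s (by simp; omega)]; omega)

theorem isWeightedHomogeneous_qm (hs : s (m + 1) = 0) {i j : ℕ} (hi : 1 ≤ i) (hij : i < j)
    (hj : j ≤ m + 1)
    (hdeg : w i + ∑ t ∈ Icc i (j - 1), (s t - 1) • w t + w (j - 1) = w (i - 1) + w j) :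
    IsWeightedHomogeneous (fun p : ZIdx m s => w p.1.val) (qm m s i j) (w (i - 1) + w j) := by
  have hsj : s j < nj m s j := by
    rcases hj.lt_or_eq with hj | rfl
    · rw [nj_of_mem_Icc m s (by simp; omega)]; omega
    · simp [nj, hs]
  have hW : IsWeightedHomogeneous (fun p : ZIdx m s => w p.1.val)
      (∏ t ∈ Icc i (j - 1), Wq m s t) (∑ t ∈ Icc i (j - 1), (s t - 1) • w t) :=
    IsWeightedHomogeneous.prod _ _ _ fun t ht =>
      isWeightedHomogeneous_Wq m s w (by simp at ht ⊢; omega)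
  refine ((isWeightedHomogeneous_Zv m s w (by omega) (nj_pos m s _)).mul
    (isWeightedHomogeneous_Zv m s w (by omega) hsj)).sub ?_
  rw [← hdeg]
  exact ((isWeightedHomogeneous_Zv m s w (by omega)
    (by rw [nj_of_mem_Icc m s (by simp; omega)]; omega)).mul hW).mul
    (isWeightedHomogeneous_Zv m s w (by omega) (nj_pos m s _))

end Homogeneity

theorem quasiminors_weighted_homogeneous_general
    (r a : ℕ)
    (m : ℕ) (βs : List ℕ)
    (hβlen : βs.length = m) (hβ2 : ∀ x ∈ βs, 2 ≤ x) :
    (∀ i j : ℕ, 1 ≤ i → i < j → j ≤ m + 1 →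
      MvPolynomial.IsWeightedHomogeneous
        (fun p : ZIdx m (fun t => βs.getD (t - 1) 0 - 1) =>
          wdeg r a (fun t => βs.getD (t - 1) 0) p.1.val)
        (qm m (fun t => βs.getD (t - 1) 0 - 1) i j)
        (wdeg r a (fun t => βs.getD (t - 1) 0) (i - 1) +
          wdeg r a (fun t => βs.getD (t - 1) 0) j)) ∧
    (∀ i j : ℕ, 1 ≤ i → i < j → j ≤ m + 1 →
      wdeg r a (fun t => βs.getD (t - 1) 0) (i - 1) +
          wdeg r a (fun t => βs.getD (t - 1) 0) j =
        wdeg r a (fun t => βs.getD (t - 1) 0) i +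
          wdeg r a (fun t => βs.getD (t - 1) 0) (j - 1) +
          ∑ t ∈ Finset.Icc i (j - 1),
            ((βs.getD (t - 1) 0 : ℤ) - 2) * wdeg r a (fun t => βs.getD (t - 1) 0) t) := by
  set β : ℕ → ℕ := fun t => βs.getD (t - 1) 0
  have hβ_last : β (m + 1) = 0 := List.getD_eq_default βs 0 (by omega)
  have hβ_ge : ∀ t ∈ Icc 1 m, 2 ≤ β t := fun t ht => by
    rw [mem_Icc] at ht
    have ht' : t - 1 < βs.length := by omega
    show 2 ≤ βs.getD (t - 1) 0
    rw [List.getD_eq_getElem βs 0 ht']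
    exact hβ2 _ (List.getElem_mem ht')
  have hsum {i j : ℕ} (hi : 1 ≤ i) (hij : i < j) :=
    sum_Icc_second_difference (wdeg r a β) (fun t => β t)
      (fun _ ht => wdeg_succ_add_pred r a β ht) hi hij
  refine ⟨fun i j hi hij hj => ?_, fun i j hi hij _ => hsum hi hij⟩
  refine isWeightedHomogeneous_qm m _ _ (show β (m + 1) - 1 = 0 by omega) hi hij hj ?_
  have hterm : ∀ t ∈ Icc i (j - 1),
      (β t - 1 - 1) • wdeg r a β t = ((β t : ℤ) - 2) * wdeg r a β t :=
    fun t ht => by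
      have := hβ_ge t (by simp at ht ⊢; omega)
      rw [nsmul_eq_mul]
      congr 1
      omega
  rw [sum_congr rfl hterm]
  linarith [hsum hi hij]

/-- giving every variable `𝗓_{i,j}` the weight `w_i = 𝕚_i + 𝕛_i`, each
quasiminor `q_{i,j}` is weighted homogeneous of degree `w_{i−1} + w_j` (so `QDet(𝗓)` is a
weighted-homogeneous ideal); equivalently, the numerical identity
`w_{i−1} + w_j = w_i + w_{j−1} + Σ_{t=i}^{j−1}(β_t − 2)·w_t` holds for `1 ≤ i < j ≤ m+1`. -/
theorem quasiminors_weighted_homogeneous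
    (r a : ℕ) (ha : 1 ≤ a) (hra : a < r) (hcop : Nat.Coprime r a)
    (m : ℕ) (βs : List ℕ)
    (hβlen : βs.length = m) (hβ2 : ∀ x ∈ βs, 2 ≤ x)
    (hβcf : hjcf (βs.map (fun x => (x : ℚ))) = (r : ℚ) / ((r : ℚ) - (a : ℚ))) :
    (∀ i j : ℕ, 1 ≤ i → i < j → j ≤ m + 1 →
      MvPolynomial.IsWeightedHomogeneous
        (fun p : ZIdx m (fun t => βs.getD (t - 1) 0 - 1) =>
          wdeg r a (fun t => βs.getD (t - 1) 0) p.1.val)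
        (qm m (fun t => βs.getD (t - 1) 0 - 1) i j)
        (wdeg r a (fun t => βs.getD (t - 1) 0) (i - 1) +
          wdeg r a (fun t => βs.getD (t - 1) 0) j)) ∧
    (∀ i j : ℕ, 1 ≤ i → i < j → j ≤ m + 1 →
      wdeg r a (fun t => βs.getD (t - 1) 0) (i - 1) +
          wdeg r a (fun t => βs.getD (t - 1) 0) j =
        wdeg r a (fun t => βs.getD (t - 1) 0) i +
          wdeg r a (fun t => βs.getD (t - 1) 0) (j - 1) +
          ∑ t ∈ Finset.Icc i (j - 1),
            ((βs.getD (t - 1) 0 : ℤ) - 2) * wdeg r a (fun t => βs.getD (t - 1) 0) t) :=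
  quasiminors_weighted_homogeneous_general r a m βs hβlen hβ2
end

section
/- Assume a > 1. If the scalars λ = (λ_{i,j}) satisfy Σ_{j=0}^{β_i−1} λ_{i,j} ≠ 0 for some 1 ≤ i ≤ e−2 (i.e. λ ∉ Δ), then there exists no λ-representation x : Q_1 → ℂ; that is, the representation variety Rep(A_{r,a,λ}, δ) with dimension vector δ = (1,…,1) is empty. -/
/-- Arrows of the quiver of the reconstruction algebra of type `A`:
`Sum.inl v` is the clockwise arrow `c_{v,v-1} : v → v−1` (`c_{0,n} : 0 → n` for `v = 0`),
`Sum.inr (Sum.inl v)` is the anticlockwise arrow `a_{v,v+1} : v → v+1` (`a_{n,0}` for `v = n`),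
`Sum.inr (Sum.inr h)` is the extra arrow `k_{h+1} : l_{h+1} → 0`. -/
abbrev Arrow (n ℓ : ℕ) : Type := Fin (n + 1) ⊕ (Fin (n + 1) ⊕ Fin ℓ)

/-- The clockwise arrow `c_{v,v−1}` (indices mod `n+1`). -/
def cc (n ℓ : ℕ) (v : ℕ) : Arrow n ℓ := Sum.inl (Fin.ofNat (n + 1) v)

/-- The anticlockwise arrow `a_{v,v+1}` (indices mod `n+1`). -/
def aa (n ℓ : ℕ) (v : ℕ) : Arrow n ℓ := Sum.inr (Sum.inl (Fin.ofNat (n + 1) v))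

/-- The arrow `k_h`, with the conventions `k_0 = c_{1,0}` and `k_h = a_{n,0}` for `h > ℓ`
(in particular `k_{ℓ+1} = a_{n,0}`). -/
def kArr (n ℓ : ℕ) (h : ℕ) : Arrow n ℓ :=
  if hh : 1 ≤ h ∧ h ≤ ℓ then Sum.inr (Sum.inr ⟨h - 1, by omega⟩)
  else if h = 0 then cc n ℓ 1 else aa n ℓ n

/-- `x(C_{0,j})`: the value of `x` on the clockwise path from `0` to `j` (for `j ≥ 1`). -/
def xcPath (n ℓ : ℕ) (x : Arrow n ℓ → ℂ) (j : ℕ) : ℂ :=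
  x (cc n ℓ 0) * ∏ v ∈ Finset.Icc (j + 1) n, x (cc n ℓ v)

/-- `x(A_{0,j})`: the value of `x` on the anticlockwise path from `0` to `j` (for `j ≥ 1`). -/
def xaPath (n ℓ : ℕ) (x : Arrow n ℓ → ℂ) (j : ℕ) : ℂ :=
  ∏ v ∈ Finset.range j, x (aa n ℓ v)

/-- A `λ`-representation of dimension vector `(1,…,1)`: a function `x : Q_1 → ℂ` satisfying,
for each `1 ≤ i ≤ e−2 = ℓ+1` (writing `d_i = l_i − l_{i−1}`), the step-`i` relations of the
deformed reconstruction algebra `A_{r,a,λ}`. -/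
def IsLamRep (n ℓ : ℕ) (L : ℕ → ℕ) (β : ℕ → ℕ) (lam : ℕ → ℕ → ℂ)
    (x : Arrow n ℓ → ℂ) : Prop :=
  ∀ i, 1 ≤ i → i ≤ ℓ + 1 →
    ((L i - L (i - 1) = 0 →
      x (kArr n ℓ i) * xcPath n ℓ x (L i)
          - x (kArr n ℓ (i - 1)) * xaPath n ℓ x (L (i - 1)) = lam i 1 ∧
      xaPath n ℓ x (L (i - 1)) * x (kArr n ℓ (i - 1))
          - xcPath n ℓ x (L i) * x (kArr n ℓ i) = lam i 0) ∧
    (0 < L i - L (i - 1) →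
      (x (kArr n ℓ i) * xcPath n ℓ x (L i)
          - x (cc n ℓ (L i)) * x (aa n ℓ (L i - 1)) = lam i (β i - 1)) ∧
      (∀ u, L (i - 1) + 1 ≤ u → u ≤ L i - 1 →
        x (aa n ℓ u) * x (cc n ℓ (u + 1)) - x (cc n ℓ u) * x (aa n ℓ (u - 1))
          = lam i (u - L (i - 1) + 1)) ∧
      (x (aa n ℓ (L (i - 1))) * x (cc n ℓ (L (i - 1) + 1))
          - x (kArr n ℓ (i - 1)) * xaPath n ℓ x (L (i - 1)) = lam i 1) ∧
      (xaPath n ℓ x (L (i - 1)) * x (kArr n ℓ (i - 1))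
          - xcPath n ℓ x (L i) * x (kArr n ℓ i) = lam i 0)))

/-- `λ ∈ Δ`: all the row sums `Σ_{j=0}^{β_i−1} λ_{i,j}` vanish. -/
def InDelta (ℓ : ℕ) (β : ℕ → ℕ) (lam : ℕ → ℕ → ℂ) : Prop :=
  ∀ i, 1 ≤ i → i ≤ ℓ + 1 → ∑ j ∈ Finset.range (β i), lam i j = 0

/-!
Fix a step `i`, write `l' = l_{i-1}`, `d = l_i − l'`, and let `K = x(k_i) x(C_{0,l_i})`,
`K' = x(k_{i-1}) x(A_{0,l'})` and `q_u = x(a_{u,u+1}) x(c_{u+1,u})`. Since all the values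
commute, the step-`i` relations say that `λ_{i,0}, …, λ_{i,β_i−1}` are the successive differences
of the closed sequence `K, K', q_{l'}, q_{l'+1}, …, q_{l_i−1}, K` (just `K, K', K` when `d = 0`),
so their sum telescopes to `0` once `β_i = d + 2`.
-/

open Finset

variable {n ℓ : ℕ} {L β : ℕ → ℕ} {lam : ℕ → ℕ → ℂ} {x : Arrow n ℓ → ℂ} {i : ℕ}

theorem IsLamRep.sum_row_eq_zero_of_sub_eq_zero (hx : IsLamRep n ℓ L β lam x)
    (hi1 : 1 ≤ i) (hi2 : i ≤ ℓ + 1) (hd : L i - L (i - 1) = 0) :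
    ∑ j ∈ range 2, lam i j = 0 := by
  obtain ⟨hOne, hZero⟩ := (hx i hi1 hi2).1 hd
  rw [sum_range_succ, sum_range_one]
  linear_combination -hZero - hOne

theorem IsLamRep.sum_row_eq_zero_of_sub_pos (hx : IsLamRep n ℓ L β lam x)
    (hi1 : 1 ≤ i) (hi2 : i ≤ ℓ + 1) (hd : 0 < L i - L (i - 1))
    (hβ : β i = L i - L (i - 1) + 2) :
    ∑ j ∈ range (β i), lam i j = 0 := by
  obtain ⟨hTop, hMid, hOne, hZero⟩ := (hx i hi1 hi2).2 hd
  obtain ⟨s, hs⟩ : ∃ s, L i = L (i - 1) + (s + 1) := ⟨L i - L (i - 1) - 1, by omega⟩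
  set l' := L (i - 1)
  set K := x (kArr n ℓ i) * xcPath n ℓ x (L i)
  set K' := x (kArr n ℓ (i - 1)) * xaPath n ℓ x l'
  let q : ℕ → ℂ := fun u => x (aa n ℓ u) * x (cc n ℓ (u + 1))
  let w : ℕ → ℂ := fun
    | 0 => K
    | 1 => K'
    | j + 2 => q (l' + j)
  have hstep : ∀ j < s + 2, lam i j = w (j + 1) - w j := by
    rintro (_ | _ | j) hj
    · linear_combination -hZero
    · linear_combination -hOne
    · have hu := hMid (l' + j + 1) (by omega) (by omega)
      rw [show l' + j + 1 - l' + 1 = j + 2 by omega, Nat.add_sub_cancel] at hu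
      linear_combination -hu
  have hlast : lam i (s + 2) = w 0 - w (s + 2) := by
    rw [hβ, hs, show l' + (s + 1) - l' + 2 - 1 = s + 2 by omega,
      show l' + (s + 1) - 1 = l' + s by omega] at hTop
    linear_combination -hTop
  rw [hβ, hs, show l' + (s + 1) - l' + 2 = s + 2 + 1 by omega, sum_range_succ,
    sum_congr rfl fun j hj => hstep j (mem_range.1 hj), sum_range_sub, hlast]
  ring

theorem IsLamRep.inDelta (hβ : ∀ i, 1 ≤ i → i ≤ ℓ + 1 → β i = L i - L (i - 1) + 2)
    (hx : IsLamRep n ℓ L β lam x) : InDelta ℓ β lam := by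
  intro i hi1 hi2
  rcases Nat.eq_zero_or_pos (L i - L (i - 1)) with hd | hd
  · rw [hβ i hi1 hi2, hd]
    exact hx.sum_row_eq_zero_of_sub_eq_zero hi1 hi2 hd
  · exact hx.sum_row_eq_zero_of_sub_pos hi1 hi2 hd (hβ i hi1 hi2)

theorem no_representation_when_lambda_not_in_Delta_general
    -- Hirzebruch–Jung expansions r/a = [α_1,…,α_n], r/(r−a) = [β_1,…,β_m]
    (n m ℓ : ℕ) (βs : List ℕ)
    -- ℓ = Σ(α_i − 2), e = ℓ + 3 = m + 2
    (hm : m = ℓ + 1)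
    -- l_h = tail vertex of k_h: weakly increasing, l_0 = 1, l_{ℓ+1} = n, with
    -- α_i − 2 of the extra arrows having tail i; Riemenschneider duality
    (L : ℕ → ℕ)
    (hdual : ∀ t, 1 ≤ t → t ≤ m → βs.getD (t - 1) 0 = L t - L (t - 1) + 2)
    -- λ ∉ Δ
    (lam : ℕ → ℕ → ℂ)
    (hlam : ∃ i, 1 ≤ i ∧ i ≤ ℓ + 1 ∧
      ∑ j ∈ Finset.range (βs.getD (i - 1) 0), lam i j ≠ 0) :
    ¬ ∃ x : Arrow n ℓ → ℂ, IsLamRep n ℓ L (fun t => βs.getD (t - 1) 0) lam x := by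
  rintro ⟨x, hx⟩
  obtain ⟨i, hi1, hi2, hne⟩ := hlam
  exact hne (hx.inDelta (fun t ht1 ht2 => hdual t ht1 (hm ▸ ht2)) i hi1 hi2)

/-- if `a > 1` and `λ ∉ Δ` (some row sum `Σ_{j=0}^{β_i−1} λ_{i,j}` is nonzero)
then there is no `λ`-representation: `Rep(A_{r,a,λ}, (1,…,1))` is empty. -/
theorem no_representation_when_lambda_not_in_Delta
    -- the group 1/r(1,a) with r > a ≥ 1 coprime
    (r a : ℕ) (ha : 1 ≤ a) (hra : a < r) (hcop : Nat.Coprime r a)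
    -- Hirzebruch–Jung expansions r/a = [α_1,…,α_n], r/(r−a) = [β_1,…,β_m]
    (n m ℓ : ℕ) (αs βs : List ℕ) (hn1 : 1 ≤ n)
    (hαlen : αs.length = n) (hα2 : ∀ x ∈ αs, 2 ≤ x)
    (hαcf : hjcf (αs.map (fun x => (x : ℚ))) = (r : ℚ) / (a : ℚ))
    (hβlen : βs.length = m) (hβ2 : ∀ x ∈ βs, 2 ≤ x)
    (hβcf : hjcf (βs.map (fun x => (x : ℚ))) = (r : ℚ) / ((r : ℚ) - (a : ℚ)))
    -- ℓ = Σ(α_i − 2), e = ℓ + 3 = m + 2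
    (hl : ℓ = ∑ i ∈ Finset.range n, (αs.getD i 0 - 2))
    (hm : m = ℓ + 1)
    -- l_h = tail vertex of k_h: weakly increasing, l_0 = 1, l_{ℓ+1} = n, with
    -- α_i − 2 of the extra arrows having tail i; Riemenschneider duality
    (L : ℕ → ℕ) (hL0 : L 0 = 1) (hLtop : L (ℓ + 1) = n)
    (hLmono : ∀ h₁ h₂, h₁ ≤ h₂ → h₂ ≤ ℓ + 1 → L h₁ ≤ L h₂)
    (hLrange : ∀ h, 1 ≤ h → h ≤ ℓ → 1 ≤ L h ∧ L h ≤ n)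
    (hmult : ∀ i, 1 ≤ i → i ≤ n →
      ((Finset.Icc 1 ℓ).filter (fun h => L h = i)).card = αs.getD (i - 1) 0 - 2)
    (hdual : ∀ t, 1 ≤ t → t ≤ m → βs.getD (t - 1) 0 = L t - L (t - 1) + 2)
    -- a > 1
    (ha1 : 1 < a)
    -- λ ∉ Δ
    (lam : ℕ → ℕ → ℂ)
    (hlam : ∃ i, 1 ≤ i ∧ i ≤ ℓ + 1 ∧
      ∑ j ∈ Finset.range (βs.getD (i - 1) 0), lam i j ≠ 0) :
    ¬ ∃ x : Arrow n ℓ → ℂ, IsLamRep n ℓ L (fun t => βs.getD (t - 1) 0) lam x :=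
  no_representation_when_lambda_not_in_Delta_general n m ℓ βs hm L hdual lam hlam
end

section
/- Assume a > 1, λ ∈ Δ, and fix t with 1 ≤ t ≤ n−1. The map x ↦ (x(c_{t+1,t}), x(a_{t,t+1})) is a bijection from the set of λ-representations x : Q_1 → ℂ satisfying x(c_{0,n}) = x(c_{n,n−1}) = ⋯ = x(c_{t+2,t+1}) = 1 and x(a_{0,1}) = x(a_{1,2}) = ⋯ = x(a_{t−1,t}) = 1 onto ℂ². (This is the chart W_t of the moduli space of the deformed reconstruction algebra A_{r,a,λ}, and it is isomorphic to affine 2-space.) -/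
/-!
The relations split into `ℓ + 1` chains: the `i`-th chain is the sequence of cycle values
`k_{i-1} A_{0,l_{i-1}}, a_{l_{i-1}} c_{l_{i-1}+1}, …, a_{l_i-1} c_{l_i}, k_i C_{0,l_i}`, and the
relations say that consecutive terms differ by `λ_{i,1}, …, λ_{i,β_i-1}`; the relation with
`λ_{i,0}` closes the chain and is implied by the others since `λ ∈ Δ`. So each chain is
determined by its first term. Consecutive chains share the arrow `k_i`, and in the chart `W_t` one of the two paths
`A_{0,l_i}`, `C_{0,l_i}` is `1` while the other is `A` or `c` times terms `a_w c_{w+1}` lying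
between `l_i` and `t`. Hence, starting from the chain through `a_t c_{t+1} = A c` and moving
outwards, every chain start is forced by the chains nearer to `t`; this well-founded recursion
has exactly one solution, and the arrows of the chart are read off from the chain terms.
-/

section RankRecursion

variable {α β : Type*} {r : α → ℕ} {F : α → (α → β) → β} {D : Set α}

def rankFix [Inhabited β] (r : α → ℕ) (F : α → (α → β) → β) : α → β :=
  (measure r).wf.fix fun a rec => F a fun b => if h : r b < r a then rec b h else default

variable (hF : ∀ a ∈ D, ∀ f g : α → β, (∀ b ∈ D, r b < r a → f b = g b) → F a f = F a g)
include hF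

theorem rankFix_eq [Inhabited β] : ∀ a ∈ D, rankFix r F a = F a (rankFix r F) := by
  intro a ha
  rw [rankFix, WellFounded.fix_eq]
  exact hF a ha _ _ fun b _ hb => by simp only [hb, dite_true]

theorem eqOn_of_forall_eq_apply {f g : α → β} (hf : ∀ a ∈ D, f a = F a f)
    (hg : ∀ a ∈ D, g a = F a g) : Set.EqOn f g D := by
  intro a ha
  induction h : r a using Nat.strong_induction_on generalizing a with
  | _ k ih =>
    rw [hf a ha, hg a ha]
    exact hF a ha f g fun b hb hlt => ih (r b) (h ▸ hlt) hb rfl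

end RankRecursion

theorem forall_sub_eq_iff_forall_eq_add_sum {G : Type*} [AddCommGroup G] {f g : ℕ → G}
    {N : ℕ} : (∀ j, 1 ≤ j → j ≤ N → f j - f (j - 1) = g j) ↔
      ∀ j ≤ N, f j = f 0 + ∑ k ∈ Finset.range j, g (k + 1) := by
  constructor
  · intro h j hj
    induction j with
    | zero => simp
    | succ j ih =>
      rw [Finset.sum_range_succ, ← add_assoc, ← ih (by omega), ← h (j + 1) (by omega) hj]
      simp
  · intro h j hj1 hjN
    obtain ⟨k, rfl⟩ : ∃ k, j = k + 1 := ⟨j - 1, by omega⟩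
    rw [h _ hjN, Nat.add_sub_cancel, h k (by omega), Finset.sum_range_succ]
    abel

namespace ReconstructionChart

/-- The chain `i` containing the term `a_u c_{u+1}`: `l_{i-1} ≤ u < l_i`, with `u = 0` in
chain `1` and `u = n` in chain `ℓ + 1`. -/
def blockOf (ℓ : ℕ) (L : ℕ → ℕ) (u : ℕ) : ℕ :=
  Nat.find (⟨ℓ + 1, le_add_self, Or.inr le_rfl⟩ : ∃ i, 1 ≤ i ∧ (u < L i ∨ ℓ + 1 ≤ i))

section Blocks

variable {ℓ : ℕ} {L : ℕ → ℕ}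

theorem one_le_blockOf (u : ℕ) : 1 ≤ blockOf ℓ L u :=
  (Nat.find_spec (⟨ℓ + 1, le_add_self, Or.inr le_rfl⟩ :
    ∃ i, 1 ≤ i ∧ (u < L i ∨ ℓ + 1 ≤ i))).1

theorem blockOf_le (u : ℕ) : blockOf ℓ L u ≤ ℓ + 1 :=
  Nat.find_min' _ ⟨le_add_self, Or.inr le_rfl⟩

theorem monotone_blockOf : Monotone (blockOf ℓ L) := fun _ _ huw =>
  Nat.find_mono fun _ ⟨hi, h⟩ => ⟨hi, h.imp_left (lt_of_le_of_lt huw)⟩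

variable (hL : MonotoneOn L (Set.Iic (ℓ + 1)))
include hL

theorem blockOf_le_iff {u i : ℕ} (hi : 1 ≤ i) (hiℓ : i ≤ ℓ + 1) :
    blockOf ℓ L u ≤ i ↔ u < L i ∨ i = ℓ + 1 := by
  rw [blockOf, Nat.find_le_iff]
  constructor
  · rintro ⟨m, hmi, -, hu | hm⟩
    · exact Or.inl (hu.trans_le (hL (Set.mem_Iic.2 (hmi.trans hiℓ)) (Set.mem_Iic.2 hiℓ) hmi))
    · exact Or.inr (by omega)
  · rintro (hu | rfl)
    · exact ⟨i, le_rfl, hi, Or.inl hu⟩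
    · exact ⟨ℓ + 1, le_rfl, hi, Or.inr le_rfl⟩

theorem lt_blockOf_iff {u i : ℕ} (hi : 1 ≤ i) (hiℓ : i ≤ ℓ + 1) (hu : u < L (ℓ + 1)) :
    i < blockOf ℓ L u ↔ L i ≤ u := by
  rw [← not_le, blockOf_le_iff hL hi hiℓ]
  constructor
  · intro h; omega
  · rintro h (h' | rfl) <;> omega

theorem blockOf_eq {u i : ℕ} (hi : 1 ≤ i) (hiℓ : i ≤ ℓ + 1) (hlo : i = 1 ∨ L (i - 1) ≤ u)
    (hhi : u < L i ∨ i = ℓ + 1) : blockOf ℓ L u = i := by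
  refine le_antisymm ((blockOf_le_iff hL hi hiℓ).2 hhi) (Nat.le_of_not_lt fun hlt => ?_)
  have := one_le_blockOf (ℓ := ℓ) (L := L) u
  have := (blockOf_le_iff hL (i := i - 1) (u := u) (by omega) (by omega)).1 (by omega)
  omega

theorem L_pred_blockOf_le {u : ℕ} (hu : L 0 ≤ u) : L (blockOf ℓ L u - 1) ≤ u := by
  have h1 := one_le_blockOf (ℓ := ℓ) (L := L) u
  have h2 := blockOf_le (ℓ := ℓ) (L := L) u
  by_contra hlt
  have := (blockOf_le_iff hL (i := blockOf ℓ L u - 1) (u := u) (by grind) (by omega)).2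
    (Or.inl (by omega))
  omega

theorem lt_L_blockOf {u : ℕ} (hu : u < L (ℓ + 1)) : u < L (blockOf ℓ L u) := by
  rcases (blockOf_le_iff hL (one_le_blockOf u) (blockOf_le u)).1 le_rfl with h | h
  · exact h
  · rwa [h]

end Blocks

/-- `Z_{i,j}`, the `j`-th term of the `i`-th chain
`k_{i-1} A_{0,l_{i-1}}, a_{l_{i-1}} c_{l_{i-1}+1}, …, a_{l_i-1} c_{l_i}, k_i C_{0,l_i}`. -/
def chainTerm (n ℓ : ℕ) (L : ℕ → ℕ) (x : Arrow n ℓ → ℂ) (i j : ℕ) : ℂ :=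
  if j = 0 then x (kArr n ℓ (i - 1)) * xaPath n ℓ x (L (i - 1))
  else if j ≤ L i - L (i - 1) then x (aa n ℓ (L (i - 1) + j - 1)) * x (cc n ℓ (L (i - 1) + j))
  else x (kArr n ℓ i) * xcPath n ℓ x (L i)

def lamSum (lam : ℕ → ℕ → ℂ) (i j : ℕ) : ℂ := ∑ k ∈ Finset.range j, lam i (k + 1)

@[simp]
theorem lamSum_zero (lam : ℕ → ℕ → ℂ) (i : ℕ) : lamSum lam i 0 = 0 :=
  Finset.sum_range_zero _

def ChainsStartAt (n ℓ : ℕ) (L : ℕ → ℕ) (lam : ℕ → ℕ → ℂ) (x : Arrow n ℓ → ℂ)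
    (B : ℕ → ℂ) : Prop :=
  ∀ i, 1 ≤ i → i ≤ ℓ + 1 → ∀ j ≤ L i - L (i - 1) + 1,
    chainTerm n ℓ L x i j = B i + lamSum lam i j

variable {n ℓ t : ℕ} {L : ℕ → ℕ} {lam : ℕ → ℕ → ℂ} {c A : ℂ} {x : Arrow n ℓ → ℂ}
  {B : ℕ → ℂ}

theorem chainTerm_zero (i : ℕ) :
    chainTerm n ℓ L x i 0 = x (kArr n ℓ (i - 1)) * xaPath n ℓ x (L (i - 1)) := by
  simp [chainTerm]

theorem chainTerm_of_le {i j : ℕ} (hj : 1 ≤ j) (hjd : j ≤ L i - L (i - 1)) :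
    chainTerm n ℓ L x i j = x (aa n ℓ (L (i - 1) + j - 1)) * x (cc n ℓ (L (i - 1) + j)) := by
  rw [chainTerm, if_neg (by omega), if_pos hjd]

theorem chainTerm_last (i : ℕ) :
    chainTerm n ℓ L x i (L i - L (i - 1) + 1) = x (kArr n ℓ i) * xcPath n ℓ x (L i) := by
  rw [chainTerm, if_neg (by omega), if_neg (by omega)]

theorem chainSteps_iff_of_lt {i : ℕ} (hd : L (i - 1) < L i) :
    (∀ j, 1 ≤ j → j ≤ L i - L (i - 1) + 1 →
        chainTerm n ℓ L x i j - chainTerm n ℓ L x i (j - 1) = lam i j) ↔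
      (chainTerm n ℓ L x i (L i - L (i - 1) + 1) - x (cc n ℓ (L i)) * x (aa n ℓ (L i - 1))
          = lam i (L i - L (i - 1) + 1)) ∧
      (∀ u, L (i - 1) + 1 ≤ u → u ≤ L i - 1 →
        x (aa n ℓ u) * x (cc n ℓ (u + 1)) - x (cc n ℓ u) * x (aa n ℓ (u - 1))
          = lam i (u - L (i - 1) + 1)) ∧
      x (aa n ℓ (L (i - 1))) * x (cc n ℓ (L (i - 1) + 1)) - chainTerm n ℓ L x i 0 = lam i 1 := by
  set p := L (i - 1)
  set d := L i - p
  have hmid : ∀ u, p ≤ u → u < L i →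
      chainTerm n ℓ L x i (u - p + 1) = x (aa n ℓ u) * x (cc n ℓ (u + 1)) := fun u hu1 hu2 => by
    rw [chainTerm_of_le (by omega) (by omega), show p + (u - p + 1) - 1 = u by omega,
      show p + (u - p + 1) = u + 1 by omega]
  have hbot : x (aa n ℓ p) * x (cc n ℓ (p + 1)) = chainTerm n ℓ L x i 1 := by
    rw [← hmid p le_rfl hd, Nat.sub_self]
  have htop : x (cc n ℓ (L i)) * x (aa n ℓ (L i - 1)) = chainTerm n ℓ L x i d := by
    have h := hmid (L i - 1) (by omega) (by omega)
    rw [show L i - 1 - p + 1 = d by omega, show L i - 1 + 1 = L i by omega] at h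
    rw [mul_comm, h]
  have hstep : ∀ u, p + 1 ≤ u → u ≤ L i - 1 →
      x (aa n ℓ u) * x (cc n ℓ (u + 1)) - x (cc n ℓ u) * x (aa n ℓ (u - 1))
        = chainTerm n ℓ L x i (u - p + 1) - chainTerm n ℓ L x i (u - p + 1 - 1) := by
    intro u hu1 hu2
    have h := hmid (u - 1) (by omega) (by omega)
    rw [show u - 1 - p + 1 = u - p + 1 - 1 by omega, Nat.sub_add_cancel (by omega : 1 ≤ u)] at h
    rw [hmid u (by omega) (by omega), h, mul_comm (x (cc n ℓ u))]
  rw [hbot, htop]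
  refine ⟨fun h => ⟨h (d + 1) (by omega) le_rfl, fun u hu1 hu2 => ?_, h 1 le_rfl (by omega)⟩,
    fun ⟨ht, hm, hb⟩ j hj1 hjd => ?_⟩
  · rw [hstep u hu1 hu2]
    exact h _ (by omega) (by omega)
  · rcases (by omega : j = 1 ∨ (2 ≤ j ∧ j ≤ d) ∨ j = d + 1) with rfl | ⟨hj2, hjd'⟩ | rfl
    · exact hb
    · have h := hm (p + j - 1) (by omega) (by omega)
      rwa [hstep _ (by omega) (by omega), show p + j - 1 - p + 1 = j by omega] at h
    · exact ht

theorem isLamRep_iff_chainSteps {β : ℕ → ℕ}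
    (hβ : ∀ i, 1 ≤ i → i ≤ ℓ + 1 → β i = L i - L (i - 1) + 2) :
    IsLamRep n ℓ L β lam x ↔ ∀ i, 1 ≤ i → i ≤ ℓ + 1 →
      (∀ j, 1 ≤ j → j ≤ L i - L (i - 1) + 1 →
        chainTerm n ℓ L x i j - chainTerm n ℓ L x i (j - 1) = lam i j) ∧
      chainTerm n ℓ L x i 0 - chainTerm n ℓ L x i (L i - L (i - 1) + 1) = lam i 0 := by
  refine forall₃_congr fun i hi hiℓ => ?_
  have hβi : β i - 1 = L i - L (i - 1) + 1 := by rw [hβ i hi hiℓ]; omega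
  rw [hβi, ← chainTerm_zero, ← chainTerm_last, mul_comm (xaPath _ _ _ _),
    mul_comm (xcPath _ _ _ _), ← chainTerm_zero, ← chainTerm_last]
  rcases Nat.eq_zero_or_pos (L i - L (i - 1)) with hd0 | hdpos
  · simp only [hd0, lt_irrefl, IsEmpty.forall_iff, and_true, forall_const]
    refine and_congr_left' ⟨fun h j hj1 hjd => ?_, fun h => h 1 le_rfl le_rfl⟩
    obtain rfl : j = 1 := by omega
    exact h
  · simp only [hdpos.ne', hdpos, IsEmpty.forall_iff, true_and, forall_const]
    rw [chainSteps_iff_of_lt (by omega), and_assoc, and_assoc]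

theorem isLamRep_iff {β : ℕ → ℕ} (hβ : ∀ i, 1 ≤ i → i ≤ ℓ + 1 → β i = L i - L (i - 1) + 2)
    (hΔ : InDelta ℓ β lam) :
    IsLamRep n ℓ L β lam x ↔ ChainsStartAt n ℓ L lam x (fun i => chainTerm n ℓ L x i 0) := by
  rw [isLamRep_iff_chainSteps hβ]
  refine forall₃_congr fun i hi hiℓ => ?_
  rw [forall_sub_eq_iff_forall_eq_add_sum]
  refine ⟨And.left, fun h => ⟨h, ?_⟩⟩
  have hsum := hΔ i hi hiℓ
  rw [hβ i hi hiℓ, Finset.sum_range_succ'] at hsum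
  rw [h _ le_rfl, lamSum]
  linear_combination -hsum

theorem ChainsStartAt.chainTerm_zero (h : ChainsStartAt n ℓ L lam x B) :
    ChainsStartAt n ℓ L lam x (fun i => chainTerm n ℓ L x i 0) := fun i hi hiℓ j hj => by
  dsimp only
  rw [h i hi hiℓ j hj, h i hi hiℓ 0 (Nat.zero_le _), lamSum_zero, add_zero]

structure InChart (n ℓ t : ℕ) (c A : ℂ) (x : Arrow n ℓ → ℂ) : Prop where
  cc_zero : x (cc n ℓ 0) = 1
  cc_of_le : ∀ v, t + 2 ≤ v → v ≤ n → x (cc n ℓ v) = 1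
  aa_of_lt : ∀ v, v + 1 ≤ t → x (aa n ℓ v) = 1
  cc_succ : x (cc n ℓ (t + 1)) = c
  aa_self : x (aa n ℓ t) = A

def vertexTerm (x : Arrow n ℓ → ℂ) (w : ℕ) : ℂ := x (aa n ℓ w) * x (cc n ℓ (w + 1))

theorem cc_add_one_self : cc n ℓ (n + 1) = cc n ℓ 0 := by
  simp [cc]

theorem cc_val (v : Fin (n + 1)) : cc n ℓ v.val = Sum.inl v := by
  simp [cc]

theorem aa_val (v : Fin (n + 1)) : aa n ℓ v.val = Sum.inr (Sum.inl v) := by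
  simp [aa]

theorem kArr_val_add_one (h : Fin ℓ) : kArr n ℓ (h.val + 1) = Sum.inr (Sum.inr h) := by
  rw [kArr, dif_pos ⟨by omega, h.isLt⟩]
  rfl

theorem xcPath_eq_mul {u : ℕ} (hu : u < n) :
    xcPath n ℓ x u = x (cc n ℓ (u + 1)) * xcPath n ℓ x (u + 1) := by
  rw [xcPath, xcPath, ← Finset.Ico_add_one_right_eq_Icc, ← Finset.Ico_add_one_right_eq_Icc,
    Finset.prod_eq_prod_Ico_succ_bot (by omega : u + 1 < n + 1)]
  ring

theorem xaPath_succ (u : ℕ) : xaPath n ℓ x (u + 1) = xaPath n ℓ x u * x (aa n ℓ u) :=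
  Finset.prod_range_succ _ _

section Chart

variable (hx : InChart n ℓ t c A x)
include hx

theorem InChart.xcPath_of_lt {u : ℕ} (hu : t < u) : xcPath n ℓ x u = 1 := by
  rw [xcPath, hx.cc_zero, one_mul]
  exact Finset.prod_eq_one fun v hv => by
    rw [Finset.mem_Icc] at hv
    exact hx.cc_of_le v (by omega) hv.2

theorem InChart.xaPath_of_le {u : ℕ} (hu : u ≤ t) : xaPath n ℓ x u = 1 :=
  Finset.prod_eq_one fun v hv => hx.aa_of_lt v (by rw [Finset.mem_range] at hv; omega)

theorem InChart.xcPath_of_le (htn : t < n) {u : ℕ} (hu : u ≤ t) :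
    xcPath n ℓ x u = c * ∏ w ∈ Finset.Ico u t, vertexTerm x w := by
  induction h : t - u generalizing u with
  | zero =>
    obtain rfl : u = t := by omega
    rw [xcPath_eq_mul htn, hx.cc_succ, hx.xcPath_of_lt (Nat.lt_succ_self u)]
    simp
  | succ k ih =>
    rw [xcPath_eq_mul (by omega), ih (u := u + 1) (by omega) (by omega),
      Finset.prod_eq_prod_Ico_succ_bot (a := u) (by omega), vertexTerm,
      hx.aa_of_lt u (by omega)]
    ring

theorem InChart.xaPath_of_lt {u : ℕ} (htu : t < u) (hun : u ≤ n) :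
    xaPath n ℓ x u = A * ∏ w ∈ Finset.Ico (t + 1) u, vertexTerm x w := by
  induction u, htu using Nat.le_induction with
  | base => rw [xaPath_succ, hx.xaPath_of_le le_rfl, hx.aa_self]; simp
  | succ u htu ih =>
    rw [xaPath_succ, ih (by omega), Finset.prod_Ico_succ_top (by omega), vertexTerm,
      hx.cc_of_le (u + 1) (by omega) hun]
    ring

end Chart

section Chain

variable (n ℓ t L lam c A)

/-- The term `a_w c_{w+1}` of the chains whose first terms are `B`. -/
def vertexValue (B : ℕ → ℂ) (w : ℕ) : ℂ :=
  B (blockOf ℓ L w) + lamSum lam (blockOf ℓ L w) (w + 1 - L (blockOf ℓ L w - 1))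

def blockLast (B : ℕ → ℂ) (i : ℕ) : ℂ := B i + lamSum lam i (L i - L (i - 1) + 1)

/-- The first term of chain `i` forced by the chains nearer to the chain `blockOf ℓ L t`
through `a_t c_{t+1} = A c`: below it `k_i = Z_{i+1,0}` and `Z_{i,last} = k_i C_{0,l_i}`, above
it `k_{i-1} = Z_{i-1,last}` and `Z_{i,0} = k_{i-1} A_{0,l_{i-1}}`. -/
def linkStep (i : ℕ) (B : ℕ → ℂ) : ℂ :=
  if i < blockOf ℓ L t then
    B (i + 1) * (c * ∏ w ∈ Finset.Ico (L i) t, vertexValue ℓ L lam B w)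
      - lamSum lam i (L i - L (i - 1) + 1)
  else if i = blockOf ℓ L t then A * c - lamSum lam i (t + 1 - L (i - 1))
  else blockLast L lam B (i - 1) *
    (A * ∏ w ∈ Finset.Ico (t + 1) (L (i - 1)), vertexValue ℓ L lam B w)

def chainStart : ℕ → ℂ :=
  rankFix (fun i => i.dist (blockOf ℓ L t)) (linkStep ℓ t L lam c A)

def kValue (B : ℕ → ℂ) (h : ℕ) : ℂ :=
  if L h ≤ t then B (h + 1) else blockLast L lam B h

def chartPoint (B : ℕ → ℂ) : Arrow n ℓ → ℂ
  | Sum.inl v =>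
    if v.val = 0 ∨ t + 2 ≤ v.val then 1 else if v.val = t + 1 then c
    else vertexValue ℓ L lam B (v.val - 1)
  | Sum.inr (Sum.inl v) =>
    if v.val < t then 1 else if v.val = t then A else vertexValue ℓ L lam B v.val
  | Sum.inr (Sum.inr h) => kValue t L lam B (h.val + 1)

end Chain

theorem chartPoint_cc {v : ℕ} (hv : v ≤ n) : chartPoint n ℓ t L lam c A B (cc n ℓ v) =
    if v = 0 ∨ t + 2 ≤ v then 1 else if v = t + 1 then c else vertexValue ℓ L lam B (v - 1) := by
  simp [cc, chartPoint, Nat.mod_eq_of_lt (Nat.lt_succ_of_le hv)]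

theorem chartPoint_aa {v : ℕ} (hv : v ≤ n) : chartPoint n ℓ t L lam c A B (aa n ℓ v) =
    if v < t then 1 else if v = t then A else vertexValue ℓ L lam B v := by
  simp [aa, chartPoint, Nat.mod_eq_of_lt (Nat.lt_succ_of_le hv)]

theorem chartPoint_kArr {h : ℕ} (h1 : 1 ≤ h) (hℓ : h ≤ ℓ) :
    chartPoint n ℓ t L lam c A B (kArr n ℓ h) = kValue t L lam B h := by
  obtain ⟨h, rfl⟩ : ∃ h' : Fin ℓ, h = h'.val + 1 := ⟨⟨h - 1, by omega⟩, by simp; omega⟩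
  rw [kArr_val_add_one, chartPoint]

theorem inChart_chartPoint (htn : t < n) :
    InChart n ℓ t c A (chartPoint n ℓ t L lam c A B) where
  cc_zero := by rw [chartPoint_cc (Nat.zero_le n), if_pos (Or.inl rfl)]
  cc_of_le v hv hvn := by rw [chartPoint_cc hvn, if_pos (Or.inr hv)]
  aa_of_lt v hv := by rw [chartPoint_aa (by omega), if_pos (by omega)]
  cc_succ := by rw [chartPoint_cc htn, if_neg (by omega), if_pos rfl]
  aa_self := by rw [chartPoint_aa htn.le, if_neg (lt_irrefl t), if_pos rfl]

theorem vertexTerm_chartPoint (htn : t < n)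
    (hB : B (blockOf ℓ L t) = linkStep ℓ t L lam c A (blockOf ℓ L t) B) {w : ℕ} (hw : w ≤ n) :
    vertexTerm (chartPoint n ℓ t L lam c A B) w = vertexValue ℓ L lam B w := by
  rw [vertexTerm, chartPoint_aa hw]
  rcases lt_trichotomy w t with hwt | rfl | htw
  · rw [if_pos hwt, chartPoint_cc (by omega), if_neg (by omega), if_neg (by omega),
      Nat.add_sub_cancel, one_mul]
  · rw [if_neg (lt_irrefl w), if_pos rfl, chartPoint_cc (by omega), if_neg (by omega),
      if_pos rfl, vertexValue, hB, linkStep, if_neg (lt_irrefl _), if_pos rfl]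
    ring
  · rw [if_neg (by omega), if_neg (by omega)]
    rcases eq_or_lt_of_le hw with rfl | hwn
    · rw [cc_add_one_self, (inChart_chartPoint htn).cc_zero, mul_one]
    · rw [(inChart_chartPoint htn).cc_of_le (w + 1) (by omega) hwn, mul_one]

theorem InChart.eq_chartPoint (hx : InChart n ℓ t c A x)
    (hv : ∀ w ≤ n, vertexTerm x w = vertexValue ℓ L lam B w)
    (hk : ∀ k, 1 ≤ k → k ≤ ℓ → x (kArr n ℓ k) = kValue t L lam B k) :
    x = chartPoint n ℓ t L lam c A B := by
  funext a
  rcases a with v | v | ⟨k, hk'⟩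
  · have hvn := Nat.lt_succ_iff.1 v.isLt
    rw [← cc_val, chartPoint_cc hvn]
    split_ifs with h0 h1
    · rcases h0 with h0 | h0
      · rw [h0, hx.cc_zero]
      · exact hx.cc_of_le _ h0 hvn
    · rw [h1, hx.cc_succ]
    · have := hv (v.val - 1) (by omega)
      rwa [vertexTerm, hx.aa_of_lt _ (by omega), one_mul, Nat.sub_add_cancel (by omega)] at this
  · have hvn := Nat.lt_succ_iff.1 v.isLt
    rw [← aa_val, chartPoint_aa hvn]
    split_ifs with h0 h1
    · exact hx.aa_of_lt _ h0
    · rw [h1, hx.aa_self]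
    · have := hv v.val hvn
      rcases eq_or_lt_of_le hvn with hn | hn
      · rw [hn]
        rwa [vertexTerm, hn, cc_add_one_self, hx.cc_zero, mul_one] at this
      · rwa [vertexTerm, hx.cc_of_le _ (by omega) hn, mul_one] at this
  · rw [← kArr_val_add_one ⟨k, hk'⟩, chartPoint_kArr (by omega) (by omega)]
    exact hk (k + 1) (by omega) (by omega)

theorem InChart.kArr_eq_of_chainsStartAt (hx : InChart n ℓ t c A x)
    (h : ChainsStartAt n ℓ L lam x B) {k : ℕ} (hk : 1 ≤ k) (hkℓ : k ≤ ℓ) :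
    x (kArr n ℓ k) = kValue t L lam B k := by
  rw [kValue]
  split_ifs with hLk
  · have := h (k + 1) (by omega) (by omega) 0 (Nat.zero_le _)
    rwa [chainTerm_zero, Nat.add_sub_cancel, hx.xaPath_of_le hLk, mul_one, lamSum_zero,
      add_zero] at this
  · have := h k hk (by omega) _ le_rfl
    rwa [chainTerm_last, hx.xcPath_of_lt (not_le.1 hLk), mul_one] at this

theorem prod_vertexTerm_eq (hv : ∀ w ≤ n, vertexTerm x w = vertexValue ℓ L lam B w)
    {a b : ℕ} (hb : b ≤ n) :
    ∏ w ∈ Finset.Ico a b, vertexTerm x w = ∏ w ∈ Finset.Ico a b, vertexValue ℓ L lam B w :=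
  Finset.prod_congr rfl fun w hw => hv w (by rw [Finset.mem_Ico] at hw; omega)

section Solutions

variable (hL : MonotoneOn L (Set.Iic (ℓ + 1)))
include hL

theorem linkStep_congr : ∀ i ∈ Set.Icc 1 (ℓ + 1), ∀ f g : ℕ → ℂ,
    (∀ b ∈ Set.Icc 1 (ℓ + 1), b.dist (blockOf ℓ L t) < i.dist (blockOf ℓ L t) → f b = g b) →
    linkStep ℓ t L lam c A i f = linkStep ℓ t L lam c A i g := by
  rintro i ⟨hi, hiℓ⟩ f g hfg
  have hi₀ := one_le_blockOf (ℓ := ℓ) (L := L) t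
  have hi₀ℓ := blockOf_le (ℓ := ℓ) (L := L) t
  have hv : ∀ w, (blockOf ℓ L w).dist (blockOf ℓ L t) < i.dist (blockOf ℓ L t) →
      vertexValue ℓ L lam f w = vertexValue ℓ L lam g w := fun w hw => by
    rw [vertexValue, vertexValue, hfg _ ⟨one_le_blockOf w, blockOf_le w⟩ hw]
  unfold linkStep blockLast
  split_ifs with hlt heq
  · rw [hfg (i + 1) ⟨by omega, by omega⟩ (by simp only [Nat.dist]; omega)]
    congr 3
    refine Finset.prod_congr rfl fun w hw => hv w ?_
    rw [Finset.mem_Ico] at hw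
    have h1 : ¬ blockOf ℓ L w ≤ i := fun h => by
      have := (blockOf_le_iff hL hi hiℓ).1 h; omega
    have h2 : blockOf ℓ L w ≤ blockOf ℓ L t := monotone_blockOf hw.2.le
    simp only [Nat.dist]; omega
  · rfl
  · rw [hfg (i - 1) ⟨by omega, by omega⟩ (by simp only [Nat.dist]; omega)]
    congr 2
    refine Finset.prod_congr rfl fun w hw => hv w ?_
    rw [Finset.mem_Ico] at hw
    have h1 : blockOf ℓ L w ≤ i - 1 :=
      (blockOf_le_iff hL (by omega) (by omega)).2 (Or.inl hw.2)
    have h2 : blockOf ℓ L t ≤ blockOf ℓ L w := monotone_blockOf (by omega)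
    simp only [Nat.dist]; omega

theorem chainStart_eq {i : ℕ} (hi : 1 ≤ i) (hiℓ : i ≤ ℓ + 1) :
    chainStart ℓ t L lam c A i = linkStep ℓ t L lam c A i (chainStart ℓ t L lam c A) :=
  rankFix_eq (linkStep_congr hL) i ⟨hi, hiℓ⟩

theorem eq_chainStart (hB : ∀ i, 1 ≤ i → i ≤ ℓ + 1 → B i = linkStep ℓ t L lam c A i B)
    {i : ℕ} (hi : 1 ≤ i) (hiℓ : i ≤ ℓ + 1) : B i = chainStart ℓ t L lam c A i :=
  eqOn_of_forall_eq_apply (linkStep_congr hL) (fun i hi => hB i hi.1 hi.2)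
    (fun _ hi => chainStart_eq hL hi.1 hi.2) ⟨hi, hiℓ⟩

variable (hL0 : L 0 = 1) (hLtop : L (ℓ + 1) = n)
include hL0 hLtop

theorem L_mem_Icc {i : ℕ} (hi : i ≤ ℓ + 1) : L i ∈ Set.Icc 1 n :=
  ⟨hL0 ▸ hL (Set.mem_Iic.2 (Nat.zero_le _)) (Set.mem_Iic.2 hi) (Nat.zero_le i),
    hLtop ▸ hL (Set.mem_Iic.2 hi) (Set.mem_Iic.2 le_rfl) hi⟩

theorem chainTerm_blockOf {w : ℕ} (hw : w ≤ n) :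
    chainTerm n ℓ L x (blockOf ℓ L w) (w + 1 - L (blockOf ℓ L w - 1)) = vertexTerm x w := by
  have hLℓ := (L_mem_Icc hL hL0 hLtop (i := ℓ) (by omega)).2
  rcases Nat.eq_zero_or_pos w with rfl | hw0
  · have hL1 := (L_mem_Icc hL hL0 hLtop (i := 1) (by omega)).1
    rw [blockOf_eq hL le_rfl (by omega) (Or.inl rfl) (Or.inl hL1), hL0, chainTerm_zero,
      vertexTerm, Nat.sub_self, hL0, xaPath, Finset.prod_range_one, kArr, dif_neg (by omega),
      if_pos rfl, mul_comm]
  rcases eq_or_lt_of_le hw with rfl | hwn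
  · have hj : w + 1 - L (ℓ + 1 - 1) = L (ℓ + 1) - L (ℓ + 1 - 1) + 1 := by
      rw [Nat.add_sub_cancel]; omega
    rw [blockOf_eq hL (by omega) le_rfl (Or.inr hLℓ) (Or.inr rfl), hj, chainTerm_last, hLtop,
      xcPath, vertexTerm, kArr, dif_neg (by omega), if_neg (by omega),
      Finset.Icc_eq_empty (by omega), Finset.prod_empty, mul_one, cc_add_one_self]
  · have hlo := L_pred_blockOf_le hL (u := w) (by omega)
    have hhi := lt_L_blockOf hL (u := w) (by omega)
    rw [chainTerm_of_le (by omega) (by omega), vertexTerm,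
      show L (blockOf ℓ L w - 1) + (w + 1 - L (blockOf ℓ L w - 1)) - 1 = w by omega,
      show L (blockOf ℓ L w - 1) + (w + 1 - L (blockOf ℓ L w - 1)) = w + 1 by omega]

theorem vertexTerm_eq_of_chainsStartAt (h : ChainsStartAt n ℓ L lam x B) {w : ℕ}
    (hw : w ≤ n) : vertexTerm x w = vertexValue ℓ L lam B w := by
  have hi := blockOf_le (ℓ := ℓ) (L := L) w
  have hwi : w ≤ L (blockOf ℓ L w) := by
    rcases (blockOf_le_iff hL (one_le_blockOf w) hi).1 le_rfl with h' | h'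
    · exact h'.le
    · rw [h', hLtop]; exact hw
  rw [← chainTerm_blockOf hL hL0 hLtop hw, h _ (one_le_blockOf w) hi _ (by omega), vertexValue]

theorem chainTerm_eq_of_vertexTerm (hv : ∀ w ≤ n, vertexTerm x w = vertexValue ℓ L lam B w)
    {i j : ℕ} (hi : 1 ≤ i) (hiℓ : i ≤ ℓ + 1)
    (hj : (1 ≤ j ∧ j ≤ L i - L (i - 1)) ∨ (i = 1 ∧ j = 0) ∨
      (i = ℓ + 1 ∧ j = L i - L (i - 1) + 1)) :
    chainTerm n ℓ L x i j = B i + lamSum lam i j := by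
  obtain ⟨-, hLi⟩ := L_mem_Icc hL hL0 hLtop hiℓ
  obtain ⟨hLi', -⟩ := L_mem_Icc hL hL0 hLtop (i := i - 1) (by omega)
  have hmono : L (i - 1) ≤ L i := hL (Set.mem_Iic.2 (by omega)) (Set.mem_Iic.2 hiℓ) (by omega)
  have hw : L (i - 1) + j - 1 ≤ n := by omega
  have hblock : blockOf ℓ L (L (i - 1) + j - 1) = i :=
    blockOf_eq hL hi hiℓ (by omega) (by omega)
  have hj' : L (i - 1) + j - 1 + 1 - L (i - 1) = j := by omega
  have := chainTerm_blockOf (x := x) hL hL0 hLtop hw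
  rw [hblock, hj'] at this
  rw [this, hv _ hw, vertexValue, hblock, hj']

variable (htn : t < n)
include htn

theorem InChart.eq_linkStep_of_chainsStartAt (hx : InChart n ℓ t c A x)
    (h : ChainsStartAt n ℓ L lam x B) {i : ℕ} (hi : 1 ≤ i) (hiℓ : i ≤ ℓ + 1) :
    B i = linkStep ℓ t L lam c A i B := by
  have hv := fun w (hw : w ≤ n) => vertexTerm_eq_of_chainsStartAt hL hL0 hLtop h hw
  have htop : t < L (ℓ + 1) := hLtop ▸ htn
  have hi₀ := one_le_blockOf (ℓ := ℓ) (L := L) t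
  have hi₀ℓ := blockOf_le (ℓ := ℓ) (L := L) t
  unfold linkStep
  split_ifs with hlt heq
  · have hLi := (lt_blockOf_iff hL hi hiℓ htop).1 hlt
    have hk := hx.kArr_eq_of_chainsStartAt h hi (by omega)
    have hlast := h i hi hiℓ _ le_rfl
    rw [kValue, if_pos hLi] at hk
    rw [chainTerm_last, hk, hx.xcPath_of_le htn hLi, prod_vertexTerm_eq hv htn.le] at hlast
    linear_combination -hlast
  · have hvt := hv t htn.le
    rw [vertexTerm, hx.aa_self, hx.cc_succ, vertexValue, ← heq] at hvt
    linear_combination -hvt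
  · have hLi : t < L (i - 1) := not_le.1 fun hle => by
      have := (lt_blockOf_iff hL (i := i - 1) (by omega) (by omega) htop).2 hle
      omega
    have hLn := (L_mem_Icc hL hL0 hLtop (i := i - 1) (by omega)).2
    have hk := hx.kArr_eq_of_chainsStartAt h (k := i - 1) (by omega) (by omega)
    rw [kValue, if_neg hLi.not_ge] at hk
    have hfirst := h i hi hiℓ 0 (Nat.zero_le _)
    rw [chainTerm_zero, hk, hx.xaPath_of_lt hLi hLn, prod_vertexTerm_eq hv hLn, lamSum_zero,
      add_zero] at hfirst
    exact hfirst.symm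

theorem InChart.chainsStartAt_of_eq_linkStep (hx : InChart n ℓ t c A x)
    (hB : ∀ i, 1 ≤ i → i ≤ ℓ + 1 → B i = linkStep ℓ t L lam c A i B)
    (hv : ∀ w ≤ n, vertexTerm x w = vertexValue ℓ L lam B w)
    (hk : ∀ k, 1 ≤ k → k ≤ ℓ → x (kArr n ℓ k) = kValue t L lam B k) :
    ChainsStartAt n ℓ L lam x B := by
  intro i hi hiℓ j hj
  have htop : t < L (ℓ + 1) := hLtop ▸ htn
  have hi₀ := one_le_blockOf (ℓ := ℓ) (L := L) t
  rcases (by omega : (1 ≤ j ∧ j ≤ L i - L (i - 1)) ∨ (i = 1 ∧ j = 0) ∨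
      (i = ℓ + 1 ∧ j = L i - L (i - 1) + 1) ∨ (2 ≤ i ∧ j = 0) ∨
      (i ≤ ℓ ∧ j = L i - L (i - 1) + 1)) with hvert | hvert | hvert | ⟨hi2, rfl⟩ | ⟨hiℓ', rfl⟩
  · exact chainTerm_eq_of_vertexTerm hL hL0 hLtop hv hi hiℓ (Or.inl hvert)
  · exact chainTerm_eq_of_vertexTerm hL hL0 hLtop hv hi hiℓ (Or.inr (Or.inl hvert))
  · exact chainTerm_eq_of_vertexTerm hL hL0 hLtop hv hi hiℓ (Or.inr (Or.inr hvert))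
  · rw [chainTerm_zero, hk (i - 1) (by omega) (by omega), kValue, lamSum_zero, add_zero]
    split_ifs with hLi
    · rw [hx.xaPath_of_le hLi, mul_one, Nat.sub_add_cancel hi]
    · have hLn := (L_mem_Icc hL hL0 hLtop (i := i - 1) (by omega)).2
      have hgt : ¬ i - 1 < blockOf ℓ L t := fun h' =>
        hLi ((lt_blockOf_iff hL (by omega) (by omega) htop).1 h')
      rw [hx.xaPath_of_lt (not_le.1 hLi) hLn, prod_vertexTerm_eq hv hLn, hB i hi hiℓ, linkStep,
        if_neg (by omega), if_neg (by omega)]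
  · rw [chainTerm_last, hk i hi hiℓ', kValue]
    split_ifs with hLi
    · have hlt : i < blockOf ℓ L t := (lt_blockOf_iff hL hi hiℓ htop).2 hLi
      rw [hx.xcPath_of_le htn hLi, prod_vertexTerm_eq hv htn.le, hB i hi hiℓ, linkStep,
        if_pos hlt]
      ring
    · rw [hx.xcPath_of_lt (not_le.1 hLi), mul_one, blockLast]

theorem chainsStartAt_chartPoint :
    ChainsStartAt n ℓ L lam (chartPoint n ℓ t L lam c A (chainStart ℓ t L lam c A))
      (chainStart ℓ t L lam c A) :=
  (inChart_chartPoint htn).chainsStartAt_of_eq_linkStep hL hL0 hLtop htn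
    (fun _ hi hiℓ => chainStart_eq hL hi hiℓ)
    (fun _ hw => vertexTerm_chartPoint htn
      (chainStart_eq hL (one_le_blockOf t) (blockOf_le t)) hw)
    (fun _ hk hkℓ => chartPoint_kArr hk hkℓ)

theorem InChart.eq_chartPoint_chainStart (hx : InChart n ℓ t c A x)
    (h : ChainsStartAt n ℓ L lam x B) :
    x = chartPoint n ℓ t L lam c A (chainStart ℓ t L lam c A) := by
  have hB : ∀ i, 1 ≤ i → i ≤ ℓ + 1 → B i = chainStart ℓ t L lam c A i := fun _ hi hiℓ =>
    eq_chainStart hL (fun _ hi hiℓ => hx.eq_linkStep_of_chainsStartAt hL hL0 hLtop htn h hi hiℓ)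
      hi hiℓ
  have h' : ChainsStartAt n ℓ L lam x (chainStart ℓ t L lam c A) := fun i hi hiℓ j hj =>
    hB i hi hiℓ ▸ h i hi hiℓ j hj
  exact hx.eq_chartPoint (fun _ hw => vertexTerm_eq_of_chainsStartAt hL hL0 hLtop h' hw)
    (fun _ hk hkℓ => hx.kArr_eq_of_chainsStartAt h' hk hkℓ)

end Solutions

end ReconstructionChart

open ReconstructionChart

theorem chart_Wt_bijective_general
    -- Hirzebruch–Jung expansions r/a = [α_1,…,α_n], r/(r−a) = [β_1,…,β_m]
    (n m ℓ : ℕ) (βs : List ℕ) (hn1 : 1 ≤ n)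
    -- ℓ = Σ(α_i − 2), e = ℓ + 3 = m + 2
    (hm : m = ℓ + 1)
    -- l_h = tail vertex of k_h: weakly increasing, l_0 = 1, l_{ℓ+1} = n, with
    -- α_i − 2 of the extra arrows having tail i; Riemenschneider duality
    (L : ℕ → ℕ) (hL0 : L 0 = 1) (hLtop : L (ℓ + 1) = n)
    (hLmono : ∀ h₁ h₂, h₁ ≤ h₂ → h₂ ≤ ℓ + 1 → L h₁ ≤ L h₂)
    (hdual : ∀ t, 1 ≤ t → t ≤ m → βs.getD (t - 1) 0 = L t - L (t - 1) + 2)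
    -- λ ∈ Δ
    (lam : ℕ → ℕ → ℂ) (hlam : InDelta ℓ (fun t => βs.getD (t - 1) 0) lam)
    -- the chart index t, 1 ≤ t ≤ n−1
    (t : ℕ) (htn : t ≤ n - 1) :
    Function.Bijective
      (fun x : {x : Arrow n ℓ → ℂ //
          IsLamRep n ℓ L (fun s => βs.getD (s - 1) 0) lam x ∧
          x (cc n ℓ 0) = 1 ∧ (∀ v, t + 2 ≤ v → v ≤ n → x (cc n ℓ v) = 1) ∧
          (∀ v, v + 1 ≤ t → x (aa n ℓ v) = 1)} =>
        ((x.val (cc n ℓ (t + 1)), x.val (aa n ℓ t)) : ℂ × ℂ)) := by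
  have hL : MonotoneOn L (Set.Iic (ℓ + 1)) := fun a _ b hb hab => hLmono a b hab hb
  have htn' : t < n := by omega
  have hrep := fun x : Arrow n ℓ → ℂ =>
    isLamRep_iff (x := x) (fun i hi hiℓ => hdual i hi (hm ▸ hiℓ)) hlam
  rw [Function.bijective_iff_existsUnique]
  rintro ⟨c, A⟩
  have hsol : InChart n ℓ t c A (chartPoint n ℓ t L lam c A (chainStart ℓ t L lam c A)) :=
    inChart_chartPoint htn'
  refine ⟨⟨_, (hrep _).2 (chainsStartAt_chartPoint hL hL0 hLtop htn').chainTerm_zero,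
    hsol.cc_zero, hsol.cc_of_le, hsol.aa_of_lt⟩, Prod.ext hsol.cc_succ hsol.aa_self, ?_⟩
  rintro ⟨y, hy, hy0, hyc, hya⟩ hyCA
  have hyx : InChart n ℓ t c A y :=
    ⟨hy0, hyc, hya, congrArg Prod.fst hyCA, congrArg Prod.snd hyCA⟩
  exact Subtype.ext (hyx.eq_chartPoint_chainStart hL hL0 hLtop htn' ((hrep y).1 hy))

/-- for `a > 1`, `λ ∈ Δ` and `1 ≤ t ≤ n−1`, the map
`x ↦ (x(c_{t+1,t}), x(a_{t,t+1}))` is a bijection from the set of `λ`-representations with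
`x(c_{0,n}) = x(c_{n,n−1}) = ⋯ = x(c_{t+2,t+1}) = 1` and
`x(a_{0,1}) = ⋯ = x(a_{t−1,t}) = 1` onto `ℂ²` (the chart `W_t`). -/
theorem chart_Wt_bijective
    -- the group 1/r(1,a) with r > a ≥ 1 coprime
    (r a : ℕ) (ha : 1 ≤ a) (hra : a < r) (hcop : Nat.Coprime r a)
    -- Hirzebruch–Jung expansions r/a = [α_1,…,α_n], r/(r−a) = [β_1,…,β_m]
    (n m ℓ : ℕ) (αs βs : List ℕ) (hn1 : 1 ≤ n)
    (hαlen : αs.length = n) (hα2 : ∀ x ∈ αs, 2 ≤ x)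
    (hαcf : hjcf (αs.map (fun x => (x : ℚ))) = (r : ℚ) / (a : ℚ))
    (hβlen : βs.length = m) (hβ2 : ∀ x ∈ βs, 2 ≤ x)
    (hβcf : hjcf (βs.map (fun x => (x : ℚ))) = (r : ℚ) / ((r : ℚ) - (a : ℚ)))
    -- ℓ = Σ(α_i − 2), e = ℓ + 3 = m + 2
    (hl : ℓ = ∑ i ∈ Finset.range n, (αs.getD i 0 - 2))
    (hm : m = ℓ + 1)
    -- l_h = tail vertex of k_h: weakly increasing, l_0 = 1, l_{ℓ+1} = n, with
    -- α_i − 2 of the extra arrows having tail i; Riemenschneider duality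
    (L : ℕ → ℕ) (hL0 : L 0 = 1) (hLtop : L (ℓ + 1) = n)
    (hLmono : ∀ h₁ h₂, h₁ ≤ h₂ → h₂ ≤ ℓ + 1 → L h₁ ≤ L h₂)
    (hLrange : ∀ h, 1 ≤ h → h ≤ ℓ → 1 ≤ L h ∧ L h ≤ n)
    (hmult : ∀ i, 1 ≤ i → i ≤ n →
      ((Finset.Icc 1 ℓ).filter (fun h => L h = i)).card = αs.getD (i - 1) 0 - 2)
    (hdual : ∀ t, 1 ≤ t → t ≤ m → βs.getD (t - 1) 0 = L t - L (t - 1) + 2)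
    -- a > 1
    (ha1 : 1 < a)
    -- λ ∈ Δ
    (lam : ℕ → ℕ → ℂ) (hlam : InDelta ℓ (fun t => βs.getD (t - 1) 0) lam)
    -- the chart index t, 1 ≤ t ≤ n−1
    (t : ℕ) (ht1 : 1 ≤ t) (htn : t ≤ n - 1) :
    Function.Bijective
      (fun x : {x : Arrow n ℓ → ℂ //
          IsLamRep n ℓ L (fun s => βs.getD (s - 1) 0) lam x ∧
          x (cc n ℓ 0) = 1 ∧ (∀ v, t + 2 ≤ v → v ≤ n → x (cc n ℓ v) = 1) ∧
          (∀ v, v + 1 ≤ t → x (aa n ℓ v) = 1)} =>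
        ((x.val (cc n ℓ (t + 1)), x.val (aa n ℓ t)) : ℂ × ℂ)) :=
  chart_Wt_bijective_general n m ℓ βs hn1 hm L hL0 hLtop hLmono hdual lam hlam t htn
end

section
/- Assume a > 1 and λ ∈ Δ. The map x ↦ (x(c_{0,n}), x(a_{n,0})) is a bijection from the set of λ-representations x : Q_1 → ℂ satisfying x(a_{0,1}) = x(a_{1,2}) = ⋯ = x(a_{n−1,n}) = 1 onto ℂ². (This is the chart W_n of the moduli space of the deformed reconstruction algebra A_{r,a,λ}, and it is isomorphic to affine 2-space.) -/
/-!
Once `x(a_{v,v+1}) = 1` for `v < n`, the relations of step `i` say exactly that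
`x(k_{i-1}) = x(k_i) x(C_{0,l_i}) + λ_{i,0}` and that, for `l_{i-1} < v ≤ l_i`,
`x(c_{v,v-1}) = x(k_i) x(C_{0,l_i}) - (λ_{i,v-l_{i-1}+1} + ⋯ + λ_{i,β_i-1})`; the one remaining
relation of the step is redundant precisely because `λ ∈ Δ`. As `C_{0,l_i}` only involves the arrows
`c_{v,v-1}` with `v > l_i`, these equations determine every arrow recursively, going down from
`k_{ℓ+1} = a_{n,0}` and `C_{0,n} = c_{0,n}`. Hence a representation is determined by
`(x(c_{0,n}), x(a_{n,0}))`, and solving the recursion attains every pair.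
-/

open Finset

namespace ChartWn

section Arrows

variable {n ℓ : ℕ}

lemma kArr_zero : kArr n ℓ 0 = cc n ℓ 1 := by
  simp [kArr]

lemma kArr_top : kArr n ℓ (ℓ + 1) = aa n ℓ n := by
  simp [kArr]

lemma Arrow.funext {α : Type*} {x y : Arrow n ℓ → α}
    (hc : ∀ v ≤ n, x (cc n ℓ v) = y (cc n ℓ v)) (ha : ∀ v ≤ n, x (aa n ℓ v) = y (aa n ℓ v))
    (hk : ∀ h, 1 ≤ h → h ≤ ℓ → x (kArr n ℓ h) = y (kArr n ℓ h)) : x = y := by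
  funext e
  rcases e with v | v | h
  · simpa [cc, Fin.ofNat_val_eq_self] using hc v (Nat.lt_succ_iff.1 v.isLt)
  · simpa [aa, Fin.ofNat_val_eq_self] using ha v (Nat.lt_succ_iff.1 v.isLt)
  · simpa [kArr] using hk (h + 1) (by omega) h.isLt

lemma xcPath_eq_mul_prod_Ioc (x : Arrow n ℓ → ℂ) (j : ℕ) :
    xcPath n ℓ x j = x (cc n ℓ 0) * ∏ v ∈ Ioc j n, x (cc n ℓ v) := by
  rw [xcPath, Finset.Icc_add_one_left_eq_Ioc]

lemma xcPath_self (x : Arrow n ℓ → ℂ) : xcPath n ℓ x n = x (cc n ℓ 0) := by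
  simp [xcPath_eq_mul_prod_Ioc]

lemma xcPath_eq_xcPath_mul_prod (x : Arrow n ℓ → ℂ) {j k : ℕ} (hjk : j ≤ k) (hk : k ≤ n) :
    xcPath n ℓ x j = xcPath n ℓ x k * ∏ v ∈ Ioc j k, x (cc n ℓ v) := by
  rw [xcPath_eq_mul_prod_Ioc, xcPath_eq_mul_prod_Ioc, ← prod_Ioc_consecutive _ hjk hk]
  ring

lemma xaPath_eq_one {x : Arrow n ℓ → ℂ} (hx : ∀ v, v + 1 ≤ n → x (aa n ℓ v) = 1) {j : ℕ}
    (hj : j ≤ n) : xaPath n ℓ x j = 1 :=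
  prod_eq_one fun v hv => hx v (by rw [mem_range] at hv; omega)

end Arrows

lemma forall_eq_sub_sum_Ico_iff {M : Type*} [AddCommGroup M] {c μ : ℕ → M} {K : M} {a b : ℕ}
    (hab : a < b) :
    (∀ v ∈ Ioc a b, c v = K - ∑ u ∈ Ico v (b + 1), μ u) ↔
      c b = K - μ b ∧ ∀ u, a < u → u < b → c u = c (u + 1) - μ u := by
  have hsplit : ∀ u < b + 1, ∑ w ∈ Ico u (b + 1), μ w = μ u + ∑ w ∈ Ico (u + 1) (b + 1), μ w :=
    fun u hu => sum_eq_sum_Ico_succ_bot hu μ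
  constructor
  · intro h
    refine ⟨by simpa using h b (by simp [hab]), fun u hau hub => ?_⟩
    rw [h u (by simp [hau, hub.le]), h (u + 1) (by simp; omega), hsplit u (by omega)]
    abel
  · rintro ⟨htop, hstep⟩ v hv
    obtain ⟨hav, hvb⟩ := mem_Ioc.1 hv
    induction hvb using Nat.decreasingInduction with
    | self => simpa using htop
    | of_succ k hk ih =>
      rw [hstep k hav hk, ih (by simp; omega) (by omega), hsplit k (by omega)]
      abel

section Chain

variable {n ℓ : ℕ} {L : ℕ → ℕ} {lam : ℕ → ℕ → ℂ}

lemma apply_le_apply_succ_le_top (hmono : MonotoneOn L (Set.Iic (ℓ + 1)))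
    (htop : L (ℓ + 1) = n) {i : ℕ} (hi : i ≤ ℓ) : L i ≤ L (i + 1) ∧ L (i + 1) ≤ n :=
  ⟨hmono (by simp; omega) (by simp; omega) (by omega),
    htop ▸ hmono (by simp; omega) (by simp) (by omega)⟩

def blockTail (L : ℕ → ℕ) (lam : ℕ → ℕ → ℂ) (i v : ℕ) : ℂ :=
  ∑ u ∈ Ico v (L (i + 1) + 1), lam (i + 1) (u - L i + 1)

lemma blockTail_bottom {i : ℕ}
    (hΔ : ∑ j ∈ range (L (i + 1) - L i + 2), lam (i + 1) j = 0) :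
    blockTail L lam i (L i + 1) = -(lam (i + 1) 0 + lam (i + 1) 1) := by
  rw [sum_range_succ', sum_range_succ'] at hΔ
  rw [blockTail, sum_Ico_eq_sum_range, Nat.add_sub_add_right]
  have hshift : ∀ k ∈ range (L (i + 1) - L i),
      lam (i + 1) (L i + 1 + k - L i + 1) = lam (i + 1) (k + 1 + 1) :=
    fun k _ => congrArg _ (by omega)
  rw [sum_congr rfl hshift]
  linear_combination hΔ

/-- The relations of step `i + 1` in the solved form of the header; block `i` is
`L i < v ≤ L (i + 1)`. -/
def IsChainSol (n ℓ : ℕ) (L : ℕ → ℕ) (lam : ℕ → ℕ → ℂ) (x : Arrow n ℓ → ℂ) : Prop :=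
  ∀ i ≤ ℓ, x (kArr n ℓ i) = x (kArr n ℓ (i + 1)) * xcPath n ℓ x (L (i + 1)) + lam (i + 1) 0 ∧
    ∀ v ∈ Ioc (L i) (L (i + 1)),
      x (cc n ℓ v) = x (kArr n ℓ (i + 1)) * xcPath n ℓ x (L (i + 1)) - blockTail L lam i v

variable {β : ℕ → ℕ} {x : Arrow n ℓ → ℂ}

lemma isChainSol_of_isLamRep (hmono : MonotoneOn L (Set.Iic (ℓ + 1))) (htop : L (ℓ + 1) = n)
    (hβ : ∀ i, 1 ≤ i → i ≤ ℓ + 1 → β i = L i - L (i - 1) + 2)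
    (hrep : IsLamRep n ℓ L β lam x) (hx : ∀ v, v + 1 ≤ n → x (aa n ℓ v) = 1) :
    IsChainSol n ℓ L lam x := by
  intro i hi
  obtain ⟨hle, hn⟩ := apply_le_apply_succ_le_top hmono htop hi
  obtain ⟨hzero, hpos⟩ := hrep (i + 1) (by omega) (by omega)
  simp only [Nat.add_sub_cancel, xaPath_eq_one hx (hle.trans hn), mul_one, one_mul] at hzero hpos
  rcases hle.eq_or_lt with hd | hd
  · obtain ⟨-, h0⟩ := hzero (by omega)
    exact ⟨by linear_combination h0, by simp [hd]⟩
  · obtain ⟨h1, h2, -, h4⟩ := hpos (by omega)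
    refine ⟨by linear_combination h4, (forall_eq_sub_sum_Ico_iff hd).2 ⟨?_, fun u hu1 hu2 => ?_⟩⟩
    · rw [hx _ (by omega), mul_one, hβ (i + 1) (by omega) (by omega), Nat.add_sub_cancel,
        show L (i + 1) - L i + 2 - 1 = L (i + 1) - L i + 1 by omega] at h1
      linear_combination -h1
    · have h := h2 u (by omega) (by omega)
      rw [hx u (by omega), hx (u - 1) (by omega), one_mul, mul_one] at h
      linear_combination -h

lemma isLamRep_of_isChainSol (hmono : MonotoneOn L (Set.Iic (ℓ + 1))) (htop : L (ℓ + 1) = n)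
    (hβ : ∀ i, 1 ≤ i → i ≤ ℓ + 1 → β i = L i - L (i - 1) + 2) (hΔ : InDelta ℓ β lam)
    (hsol : IsChainSol n ℓ L lam x) (hx : ∀ v, v + 1 ≤ n → x (aa n ℓ v) = 1) :
    IsLamRep n ℓ L β lam x := by
  intro i hi1 hi2
  obtain ⟨i, rfl⟩ : ∃ j, i = j + 1 := ⟨i - 1, by omega⟩
  obtain ⟨hk, hc⟩ := hsol i (by omega)
  obtain ⟨hle, hn⟩ := apply_le_apply_succ_le_top hmono htop (i := i) (by omega)
  have hβi := hβ (i + 1) hi1 hi2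
  have hΔi := hΔ (i + 1) hi1 hi2
  simp only [Nat.add_sub_cancel] at hβi hΔi ⊢
  rw [hβi] at hΔi ⊢
  have hbot := blockTail_bottom hΔi
  simp only [xaPath_eq_one hx (hle.trans hn), mul_one, one_mul]
  refine ⟨fun hd => ⟨?_, by linear_combination hk⟩, fun hd => ?_⟩
  · have hempty : blockTail L lam i (L i + 1) = 0 := by
      simp [blockTail, show L (i + 1) = L i by omega]
    linear_combination -hk + hempty - hbot
  · obtain ⟨htop', hstep⟩ := (forall_eq_sub_sum_Ico_iff (by omega)).1 hc
    refine ⟨?_, fun u hu1 hu2 => ?_, ?_, by linear_combination hk⟩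
    · rw [hx _ (by omega), mul_one, show L (i + 1) - L i + 2 - 1 = L (i + 1) - L i + 1 by omega]
      linear_combination -htop'
    · rw [hx u (by omega), hx (u - 1) (by omega), one_mul, mul_one, hstep u (by omega) (by omega)]
      ring
    · rw [hx _ (by omega), one_mul, hc (L i + 1) (by simp; omega), hbot]
      linear_combination -hk

end Chain

section Construction

variable {n ℓ : ℕ} {L : ℕ → ℕ} {lam : ℕ → ℕ → ℂ} {p q : ℂ}

def chainStep (L : ℕ → ℕ) (lam : ℕ → ℕ → ℂ) (i : ℕ) (KC : ℂ × ℂ) : ℂ × ℂ :=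
  (KC.1 * KC.2 + lam (i + 1) 0,
    KC.2 * ∏ v ∈ Ioc (L i) (L (i + 1)), (KC.1 * KC.2 - blockTail L lam i v))

/-- `chain ℓ L lam p q i` is the pair of values that `IsChainSol` forces on `k_i` and on the path
`C_{0,L i}` once `x(c_{0,n}) = p` and `x(a_{n,0}) = q`. -/
def chain (ℓ : ℕ) (L : ℕ → ℕ) (lam : ℕ → ℕ → ℂ) (p q : ℂ) (i : ℕ) : ℂ × ℂ :=
  if i ≤ ℓ then chainStep L lam i (chain ℓ L lam p q (i + 1)) else (q, p)
termination_by ℓ + 1 - i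

lemma chain_top : chain ℓ L lam p q (ℓ + 1) = (q, p) := by
  rw [chain, if_neg (by omega)]

lemma chain_of_le {i : ℕ} (hi : i ≤ ℓ) :
    chain ℓ L lam p q i = chainStep L lam i (chain ℓ L lam p q (i + 1)) := by
  rw [chain, if_pos hi]

lemma xcPath_eq_chain_snd {x : Arrow n ℓ → ℂ} {i : ℕ} (hi : i ≤ ℓ) (hle : L i ≤ L (i + 1))
    (hn : L (i + 1) ≤ n) (hC : xcPath n ℓ x (L (i + 1)) = (chain ℓ L lam p q (i + 1)).2)
    (hc : ∀ v ∈ Ioc (L i) (L (i + 1)), x (cc n ℓ v) =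
      (chain ℓ L lam p q (i + 1)).1 * (chain ℓ L lam p q (i + 1)).2 - blockTail L lam i v) :
    xcPath n ℓ x (L i) = (chain ℓ L lam p q i).2 := by
  rw [xcPath_eq_xcPath_mul_prod x hle hn, hC, chain_of_le hi, chainStep, prod_congr rfl hc]

lemma IsChainSol.eq_chain {x : Arrow n ℓ → ℂ} (hsol : IsChainSol n ℓ L lam x)
    (hmono : MonotoneOn L (Set.Iic (ℓ + 1))) (htop : L (ℓ + 1) = n) {i : ℕ} (hi : i ≤ ℓ + 1) :
    x (kArr n ℓ i) = (chain ℓ L lam (x (cc n ℓ 0)) (x (aa n ℓ n)) i).1 ∧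
      xcPath n ℓ x (L i) = (chain ℓ L lam (x (cc n ℓ 0)) (x (aa n ℓ n)) i).2 := by
  induction hi using Nat.decreasingInduction with
  | self => simp [chain_top, kArr_top, htop, xcPath_self]
  | of_succ i hi ih =>
    obtain ⟨hk, hC⟩ := ih
    obtain ⟨hki, hci⟩ := hsol i (by omega)
    obtain ⟨hle, hn⟩ := apply_le_apply_succ_le_top hmono htop (by omega : i ≤ ℓ)
    rw [hk, hC] at hki hci
    exact ⟨by rw [hki, chain_of_le (i := i) (by omega), chainStep],
      xcPath_eq_chain_snd (by omega) hle hn hC hci⟩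

noncomputable def blockIdx (L : ℕ → ℕ) (v : ℕ) : ℕ := sInf {i | v ≤ L (i + 1)}

lemma blockIdx_spec {v : ℕ} (h0 : L 0 < v) (htop : v ≤ L (ℓ + 1)) :
    blockIdx L v ≤ ℓ ∧ L (blockIdx L v) < v ∧ v ≤ L (blockIdx L v + 1) := by
  have hmem : v ≤ L (blockIdx L v + 1) := Nat.sInf_mem (s := {i | v ≤ L (i + 1)}) ⟨ℓ, htop⟩
  refine ⟨Nat.sInf_le htop, ?_, hmem⟩
  by_cases h : blockIdx L v = 0
  · rwa [h]
  · obtain ⟨j, hj⟩ := Nat.exists_eq_add_one_of_ne_zero h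
    have hlt : j < sInf {i | v ≤ L (i + 1)} := by unfold blockIdx at hj; omega
    have hnot : j ∉ {i | v ≤ L (i + 1)} := Nat.notMem_of_lt_sInf hlt
    rw [hj]
    exact lt_of_not_ge hnot

lemma blockIdx_eq (hmono : MonotoneOn L (Set.Iic (ℓ + 1))) {i v : ℕ} (hi : i ≤ ℓ)
    (hv : v ∈ Ioc (L i) (L (i + 1))) : blockIdx L v = i := by
  rw [mem_Ioc] at hv
  refine le_antisymm (Nat.sInf_le hv.2) (le_of_not_gt fun hlt => ?_)
  have hmem : v ≤ L (blockIdx L v + 1) := Nat.sInf_mem (s := {i | v ≤ L (i + 1)}) ⟨i, hv.2⟩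
  have := hmono (by simp; omega) (by simp; omega) (show blockIdx L v + 1 ≤ i by omega)
  omega

noncomputable def chainRep (n ℓ : ℕ) (L : ℕ → ℕ) (lam : ℕ → ℕ → ℂ) (p q : ℂ) : Arrow n ℓ → ℂ
  | Sum.inl v =>
    if (v : ℕ) = 0 then p
    -- `c_{1,0}` is `k_0`, which lies in no block since `L 0 = 1`
    else if (v : ℕ) = 1 then (chain ℓ L lam p q 0).1
    else (chain ℓ L lam p q (blockIdx L v + 1)).1 * (chain ℓ L lam p q (blockIdx L v + 1)).2
      - blockTail L lam (blockIdx L v) v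
  | Sum.inr (Sum.inl v) => if (v : ℕ) = n then q else 1
  | Sum.inr (Sum.inr h) => (chain ℓ L lam p q (h + 1)).1

lemma chainRep_cc_zero : chainRep n ℓ L lam p q (cc n ℓ 0) = p := by
  simp [chainRep, cc]

lemma chainRep_aa {v : ℕ} (hv : v < n) : chainRep n ℓ L lam p q (aa n ℓ v) = 1 := by
  simp [chainRep, aa, Nat.mod_eq_of_lt (Nat.lt_succ_of_lt hv), hv.ne]

lemma chainRep_aa_self : chainRep n ℓ L lam p q (aa n ℓ n) = q := by
  simp [chainRep, aa]

lemma chainRep_cc {v : ℕ} (h2 : 2 ≤ v) (hv : v ≤ n) :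
    chainRep n ℓ L lam p q (cc n ℓ v) =
      (chain ℓ L lam p q (blockIdx L v + 1)).1 * (chain ℓ L lam p q (blockIdx L v + 1)).2
        - blockTail L lam (blockIdx L v) v := by
  simp [chainRep, cc, Nat.mod_eq_of_lt (Nat.lt_succ_of_le hv), show v ≠ 0 by omega,
    show v ≠ 1 by omega]

lemma chainRep_kArr (hn : 1 ≤ n) {i : ℕ} (hi : i ≤ ℓ + 1) :
    chainRep n ℓ L lam p q (kArr n ℓ i) = (chain ℓ L lam p q i).1 := by
  rcases Nat.eq_zero_or_pos i with rfl | hpos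
  · simp [kArr_zero, chainRep, cc, Nat.mod_eq_of_lt (show 1 < n + 1 by omega)]
  rcases hi.eq_or_lt with rfl | hlt
  · rw [kArr_top, chainRep_aa_self, chain_top]
  · rw [kArr, dif_pos ⟨hpos, by omega⟩]
    simp [chainRep, Nat.sub_add_cancel hpos]

lemma chainRep_cc_of_mem_Ioc (hmono : MonotoneOn L (Set.Iic (ℓ + 1))) {i v : ℕ} (hi : i ≤ ℓ)
    (hL : 1 ≤ L i) (hn : L (i + 1) ≤ n) (hv : v ∈ Ioc (L i) (L (i + 1))) :
    chainRep n ℓ L lam p q (cc n ℓ v) =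
      (chain ℓ L lam p q (i + 1)).1 * (chain ℓ L lam p q (i + 1)).2 - blockTail L lam i v := by
  have hv' := mem_Ioc.1 hv
  rw [chainRep_cc (by omega) (by omega), blockIdx_eq hmono hi hv]

lemma one_le_apply_of_le (hmono : MonotoneOn L (Set.Iic (ℓ + 1))) (hL0 : L 0 = 1) {i : ℕ}
    (hi : i ≤ ℓ + 1) : 1 ≤ L i :=
  hL0 ▸ hmono (by simp) (by simpa using hi) (Nat.zero_le _)

lemma chainRep_isChainSol (hmono : MonotoneOn L (Set.Iic (ℓ + 1))) (hL0 : L 0 = 1)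
    (htop : L (ℓ + 1) = n) : IsChainSol n ℓ L lam (chainRep n ℓ L lam p q) := by
  have hn : 1 ≤ n := htop ▸ one_le_apply_of_le hmono hL0 le_rfl
  have hblock : ∀ i ≤ ℓ, ∀ v ∈ Ioc (L i) (L (i + 1)), chainRep n ℓ L lam p q (cc n ℓ v) =
      (chain ℓ L lam p q (i + 1)).1 * (chain ℓ L lam p q (i + 1)).2 - blockTail L lam i v :=
    fun i hi _ hv => chainRep_cc_of_mem_Ioc hmono hi (one_le_apply_of_le hmono hL0 (by omega))
      (apply_le_apply_succ_le_top hmono htop hi).2 hv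
  have hC : ∀ i ≤ ℓ + 1, xcPath n ℓ (chainRep n ℓ L lam p q) (L i) = (chain ℓ L lam p q i).2 := by
    intro i hi
    induction hi using Nat.decreasingInduction with
    | self => rw [htop, xcPath_self, chainRep_cc_zero, chain_top]
    | of_succ i hi ih =>
      obtain ⟨hle, hn'⟩ := apply_le_apply_succ_le_top hmono htop (by omega : i ≤ ℓ)
      exact xcPath_eq_chain_snd (by omega) hle hn' ih (hblock i (by omega))
  intro i hi
  rw [chainRep_kArr hn (i := i) (by omega), chainRep_kArr hn (i := i + 1) (by omega),
    hC (i + 1) (by omega)]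
  exact ⟨by rw [chain_of_le (i := i) hi, chainStep], hblock i hi⟩

lemma IsChainSol.eq_chainRep {x : Arrow n ℓ → ℂ} (hsol : IsChainSol n ℓ L lam x)
    (hmono : MonotoneOn L (Set.Iic (ℓ + 1))) (hL0 : L 0 = 1) (htop : L (ℓ + 1) = n)
    (hx : ∀ v, v + 1 ≤ n → x (aa n ℓ v) = 1) :
    x = chainRep n ℓ L lam (x (cc n ℓ 0)) (x (aa n ℓ n)) := by
  have hn : 1 ≤ n := htop ▸ one_le_apply_of_le hmono hL0 le_rfl
  refine Arrow.funext (fun v hv => ?_) (fun v hv => ?_) (fun h h1 h2 => ?_)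
  · rcases (show v = 0 ∨ v = 1 ∨ 2 ≤ v by omega) with rfl | rfl | h2
    · rw [chainRep_cc_zero]
    · rw [← kArr_zero, chainRep_kArr hn (Nat.zero_le _),
        (hsol.eq_chain hmono htop (Nat.zero_le _)).1]
    · obtain ⟨hi, hlow, hhigh⟩ := blockIdx_spec (ℓ := ℓ) (L := L) (v := v) (by omega) (by omega)
      obtain ⟨hk, hC⟩ := hsol.eq_chain hmono htop (i := blockIdx L v + 1) (by omega)
      rw [chainRep_cc h2 hv, (hsol _ hi).2 v (mem_Ioc.2 ⟨hlow, hhigh⟩), hk, hC]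
  · rcases hv.lt_or_eq with hlt | rfl
    · rw [hx v hlt, chainRep_aa hlt]
    · rw [chainRep_aa_self]
  · rw [chainRep_kArr hn (by omega), (hsol.eq_chain hmono htop (by omega)).1]

end Construction

end ChartWn

open ChartWn

theorem chart_Wn_bijective_general
    -- Hirzebruch–Jung expansions r/a = [α_1,…,α_n], r/(r−a) = [β_1,…,β_m]
    (n m ℓ : ℕ) (βs : List ℕ)
    -- ℓ = Σ(α_i − 2), e = ℓ + 3 = m + 2
    (hm : m = ℓ + 1)
    -- l_h = tail vertex of k_h: weakly increasing, l_0 = 1, l_{ℓ+1} = n, with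
    -- α_i − 2 of the extra arrows having tail i; Riemenschneider duality
    (L : ℕ → ℕ) (hL0 : L 0 = 1) (hLtop : L (ℓ + 1) = n)
    (hLmono : ∀ h₁ h₂, h₁ ≤ h₂ → h₂ ≤ ℓ + 1 → L h₁ ≤ L h₂)
    (hdual : ∀ t, 1 ≤ t → t ≤ m → βs.getD (t - 1) 0 = L t - L (t - 1) + 2)
    -- λ ∈ Δ
    (lam : ℕ → ℕ → ℂ) (hlam : InDelta ℓ (fun t => βs.getD (t - 1) 0) lam) :
    Function.Bijective
      (fun x : {x : Arrow n ℓ → ℂ //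
          IsLamRep n ℓ L (fun t => βs.getD (t - 1) 0) lam x ∧
          (∀ v, v + 1 ≤ n → x (aa n ℓ v) = 1)} =>
        ((x.val (cc n ℓ 0), x.val (aa n ℓ n)) : ℂ × ℂ)) := by
  have hmono : MonotoneOn L (Set.Iic (ℓ + 1)) := fun a _ b hb hab => hLmono a b hab hb
  have hβ : ∀ i, 1 ≤ i → i ≤ ℓ + 1 → βs.getD (i - 1) 0 = L i - L (i - 1) + 2 :=
    fun i h1 h2 => hdual i h1 (hm ▸ h2)
  refine ⟨?_, fun ⟨p, q⟩ => ?_⟩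
  · rintro ⟨x, hxrep, hx⟩ ⟨y, hyrep, hy⟩ hxy
    obtain ⟨hp, hq⟩ : x (cc n ℓ 0) = y (cc n ℓ 0) ∧ x (aa n ℓ n) = y (aa n ℓ n) :=
      Prod.mk.inj hxy
    have hxeq := (isChainSol_of_isLamRep hmono hLtop hβ hxrep hx).eq_chainRep hmono hL0 hLtop hx
    have hyeq := (isChainSol_of_isLamRep hmono hLtop hβ hyrep hy).eq_chainRep hmono hL0 hLtop hy
    refine Subtype.ext (?_ : x = y)
    rw [hxeq, hyeq, hp, hq]
  · refine ⟨⟨chainRep n ℓ L lam p q, isLamRep_of_isChainSol hmono hLtop hβ hlam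
      (chainRep_isChainSol hmono hL0 hLtop) (fun v hv => chainRep_aa (by omega)),
      fun v hv => chainRep_aa (by omega)⟩, ?_⟩
    simp only [chainRep_cc_zero, chainRep_aa_self]

/-- for `a > 1` and `λ ∈ Δ`, the map `x ↦ (x(c_{0,n}), x(a_{n,0}))` is a
bijection from the set of `λ`-representations with
`x(a_{0,1}) = x(a_{1,2}) = ⋯ = x(a_{n−1,n}) = 1` onto `ℂ²` (the chart `W_n`). -/
theorem chart_Wn_bijective
    -- the group 1/r(1,a) with r > a ≥ 1 coprime
    (r a : ℕ) (ha : 1 ≤ a) (hra : a < r) (hcop : Nat.Coprime r a)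
    -- Hirzebruch–Jung expansions r/a = [α_1,…,α_n], r/(r−a) = [β_1,…,β_m]
    (n m ℓ : ℕ) (αs βs : List ℕ) (hn1 : 1 ≤ n)
    (hαlen : αs.length = n) (hα2 : ∀ x ∈ αs, 2 ≤ x)
    (hαcf : hjcf (αs.map (fun x => (x : ℚ))) = (r : ℚ) / (a : ℚ))
    (hβlen : βs.length = m) (hβ2 : ∀ x ∈ βs, 2 ≤ x)
    (hβcf : hjcf (βs.map (fun x => (x : ℚ))) = (r : ℚ) / ((r : ℚ) - (a : ℚ)))
    -- ℓ = Σ(α_i − 2), e = ℓ + 3 = m + 2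
    (hl : ℓ = ∑ i ∈ Finset.range n, (αs.getD i 0 - 2))
    (hm : m = ℓ + 1)
    -- l_h = tail vertex of k_h: weakly increasing, l_0 = 1, l_{ℓ+1} = n, with
    -- α_i − 2 of the extra arrows having tail i; Riemenschneider duality
    (L : ℕ → ℕ) (hL0 : L 0 = 1) (hLtop : L (ℓ + 1) = n)
    (hLmono : ∀ h₁ h₂, h₁ ≤ h₂ → h₂ ≤ ℓ + 1 → L h₁ ≤ L h₂)
    (hLrange : ∀ h, 1 ≤ h → h ≤ ℓ → 1 ≤ L h ∧ L h ≤ n)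
    (hmult : ∀ i, 1 ≤ i → i ≤ n →
      ((Finset.Icc 1 ℓ).filter (fun h => L h = i)).card = αs.getD (i - 1) 0 - 2)
    (hdual : ∀ t, 1 ≤ t → t ≤ m → βs.getD (t - 1) 0 = L t - L (t - 1) + 2)
    -- a > 1
    (ha1 : 1 < a)
    -- λ ∈ Δ
    (lam : ℕ → ℕ → ℂ) (hlam : InDelta ℓ (fun t => βs.getD (t - 1) 0) lam) :
    Function.Bijective
      (fun x : {x : Arrow n ℓ → ℂ //
          IsLamRep n ℓ L (fun t => βs.getD (t - 1) 0) lam x ∧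
          (∀ v, v + 1 ≤ n → x (aa n ℓ v) = 1)} =>
        ((x.val (cc n ℓ 0), x.val (aa n ℓ n)) : ℂ × ℂ)) :=
  chart_Wn_bijective_general n m ℓ βs hm L hL0 hLtop hLmono hdual lam hlam
end

section
/- The quotient ring ℂ[𝗓]/QDet(𝗓) is an integral domain (being isomorphic, by the main theorem, to a subalgebra of a polynomial ring, namely the invariant ring ℛ^G). -/
open MvPolynomial

/-!
The quasiminors are binomials killed by the monomial map `param` into a polynomial ring, so it
suffices to show `QDet = ker param`. Modulo `QDet` every monomial is congruent to a normal one,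
divisible by no leading term `𝗓_{a,0} 𝗓_{k+1,s_{k+1}}` (`a < k`): replacing a leading term by the
other term of its quasiminor lowers a weight. On normal monomials `param` is injective: there the
`𝗓_{k+1,s_{k+1}}` occur only for `k` up to the least `a` with `𝗓_{a,0}` present, so their exponents
are recovered greedily from the exponents of the `X_{k,0}` (each the sum of the exponents of
`𝗓_{k,0}` and `𝗓_{k+1,s_{k+1}}`) and of `X_{1,s_1}` (their total) in the image.
-/

theorem Finsupp.linearCombination_apply_apply_eq_sum {ι κ : Type*} [Fintype ι] (w : ι → κ →₀ ℕ)
    (d : ι →₀ ℕ) (p : κ) : Finsupp.linearCombination ℕ w d p = ∑ i, d i * w i p := by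
  rw [Finsupp.linearCombination_apply, Finsupp.sum_fintype _ _ (by simp), Finsupp.finsetSum_apply]
  simp

namespace MvPolynomial

variable {σ τ R : Type*}

theorem aeval_monomial_one_monomial [CommSemiring R] (w : σ → τ →₀ ℕ) (d : σ →₀ ℕ) (c : R) :
    aeval (fun i => (monomial (w i) 1 : MvPolynomial τ R)) (monomial d c)
      = monomial (Finsupp.linearCombination ℕ w d) c := by
  rw [aeval_monomial, Finsupp.linearCombination_apply, monomial_finsupp_sum_index, algebraMap_eq]
  simp only [monomial_pow, one_pow]

theorem coeff_aeval_monomial_one [CommSemiring R] (w : σ → τ →₀ ℕ) {N : Set (σ →₀ ℕ)}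
    (hN : Set.InjOn (Finsupp.linearCombination ℕ w) N) {p : MvPolynomial σ R}
    (hp : ↑p.support ⊆ N) {d : σ →₀ ℕ} (hd : d ∈ N) :
    coeff (Finsupp.linearCombination ℕ w d)
      (aeval (fun i => (monomial (w i) 1 : MvPolynomial τ R)) p) = coeff d p := by
  classical
  conv_lhs => rw [p.as_sum, map_sum]
  simp only [aeval_monomial_one_monomial, coeff_sum, coeff_monomial]
  rw [Finset.sum_eq_single d (fun e he hne => if_neg fun h => hne (hN (hp he) hd h))]
  · rw [if_pos rfl]
  · intro hd'
    rw [if_pos rfl, notMem_support_iff.1 hd']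

theorem exists_sub_mem_of_forall_monomial [CommRing R] {I : Ideal (MvPolynomial σ R)}
    {N : Set (σ →₀ ℕ)} (h : ∀ d, ∃ d' ∈ N, monomial d (1 : R) - monomial d' 1 ∈ I)
    (p : MvPolynomial σ R) : ∃ p' : MvPolynomial σ R, ↑p'.support ⊆ N ∧ p - p' ∈ I := by
  classical
  induction p using MvPolynomial.induction_on' with
  | monomial d c =>
    obtain ⟨d', hd', hI⟩ := h d
    refine ⟨monomial d' c, fun e he => ?_, ?_⟩
    · rwa [Finset.mem_singleton.1 (support_monomial_subset he)]
    · have : monomial d c - monomial d' c = C c * (monomial d (1 : R) - monomial d' 1) := by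
        rw [mul_sub, C_mul_monomial, C_mul_monomial, mul_one]
      exact this ▸ I.mul_mem_left _ hI
  | add p q hp hq =>
    obtain ⟨p', hp', hpI⟩ := hp
    obtain ⟨q', hq', hqI⟩ := hq
    refine ⟨p' + q', fun e he => ?_, ?_⟩
    · rcases Finset.mem_union.1 (support_add he) with he | he
      exacts [hp' he, hq' he]
    · rw [add_sub_add_comm]
      exact I.add_mem hpI hqI

theorem exists_monomial_sub_mem_of_decreasing [CommRing R] {I : Ideal (MvPolynomial σ R)}
    {N : Set (σ →₀ ℕ)} (μ : (σ →₀ ℕ) → ℕ)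
    (step : ∀ d ∉ N, ∃ d', μ d' < μ d ∧ monomial d (1 : R) - monomial d' 1 ∈ I)
    (d : σ →₀ ℕ) : ∃ d' ∈ N, monomial d (1 : R) - monomial d' 1 ∈ I := by
  induction hμ : μ d using Nat.strong_induction_on generalizing d with
  | _ n ih =>
    by_cases hd : d ∈ N
    · exact ⟨d, hd, by rw [sub_self]; exact I.zero_mem⟩
    obtain ⟨d', hlt, hI⟩ := step d hd
    obtain ⟨d'', hd'', hI'⟩ := ih _ (hμ ▸ hlt) d' rfl
    exact ⟨d'', hd'', sub_add_sub_cancel (monomial d (1 : R)) _ _ ▸ I.add_mem hI hI'⟩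

theorem ker_aeval_monomial_one_eq [CommRing R] (w : σ → τ →₀ ℕ) {I : Ideal (MvPolynomial σ R)}
    {N : Set (σ →₀ ℕ)} (hI : I ≤ RingHom.ker (aeval fun i => (monomial (w i) 1 : MvPolynomial τ R)))
    (hN : Set.InjOn (Finsupp.linearCombination ℕ w) N)
    (h : ∀ d, ∃ d' ∈ N, monomial d (1 : R) - monomial d' 1 ∈ I) :
    RingHom.ker (aeval fun i => (monomial (w i) 1 : MvPolynomial τ R)) = I := by
  refine le_antisymm (fun p hp => ?_) hI
  obtain ⟨p', hp', hpI⟩ := exists_sub_mem_of_forall_monomial h p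
  have hp'0 : aeval (fun i => (monomial (w i) 1 : MvPolynomial τ R)) p' = 0 := by
    have := hI hpI
    rwa [RingHom.mem_ker, map_sub, RingHom.mem_ker.1 hp, zero_sub, neg_eq_zero] at this
  have : p' = 0 := by
    ext d
    by_contra hd
    have hdN : d ∈ N := hp' (mem_support_iff.2 hd)
    exact hd (by rw [← coeff_aeval_monomial_one w hN hp' hdN, hp'0, coeff_zero, coeff_zero])
  simpa [this] using hpI

end MvPolynomial

theorem le_of_sum_range_eq_of_add_eq {n : ℕ} {α β α' β' : ℕ → ℕ}
    (h0 : α 0 + β 0 = α' 0 + β' 0)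
    (htot : ∑ k ∈ Finset.range (n + 1), β k = ∑ k ∈ Finset.range (n + 1), β' k)
    (hN : α 0 ≠ 0 → ∀ k ∈ Finset.range (n + 1), β k ≠ 0 → k = 0) : β' 0 ≤ β 0 := by
  by_contra! hlt
  have htail : ∑ k ∈ Finset.range n, β (k + 1) = 0 :=
    Finset.sum_eq_zero fun k hk => by_contra fun hne => by
      simpa using hN (by omega) (k + 1) (by simp at hk ⊢; omega) hne
  rw [Finset.sum_range_succ', Finset.sum_range_succ', htail] at htot
  omega

theorem eq_of_sum_range_eq_of_add_eq {n : ℕ} {α β α' β' : ℕ → ℕ}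
    (hadd : ∀ k < n, α k + β k = α' k + β' k)
    (htot : ∑ k ∈ Finset.range n, β k = ∑ k ∈ Finset.range n, β' k)
    (hN : ∀ a < n, ∀ k < n, α a ≠ 0 → β k ≠ 0 → k ≤ a)
    (hN' : ∀ a < n, ∀ k < n, α' a ≠ 0 → β' k ≠ 0 → k ≤ a) :
    ∀ k < n, β k = β' k := by
  induction n generalizing α β α' β' with
  | zero => simp
  | succ n ih =>
    have hhead : β 0 = β' 0 := le_antisymm
      (le_of_sum_range_eq_of_add_eq (hadd 0 n.succ_pos).symm htot.symm
        fun ha k hk hb => by simpa using hN' 0 n.succ_pos k (Finset.mem_range.1 hk) ha hb)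
      (le_of_sum_range_eq_of_add_eq (hadd 0 n.succ_pos) htot
        fun ha k hk hb => by simpa using hN 0 n.succ_pos k (Finset.mem_range.1 hk) ha hb)
    have htail := ih (α := fun k => α (k + 1)) (β := fun k => β (k + 1))
      (α' := fun k => α' (k + 1)) (β' := fun k => β' (k + 1))
      (fun k hk => hadd _ (by omega))
      (by rw [Finset.sum_range_succ', Finset.sum_range_succ', hhead] at htot; omega)
      (fun a ha k hk hα hβ => by have := hN _ (by omega) _ (by omega) hα hβ; omega)
      (fun a ha k hk hα hβ => by have := hN' _ (by omega) _ (by omega) hα hβ; omega)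
    rintro (_ | k) hk
    exacts [hhead, htail k (by omega)]

namespace QDet

variable {m : ℕ} {s : ℕ → ℕ}

theorem eq_zidx_iff {i j : ℕ} (hi : i < m + 2) (hj : j < nj m s i) {v : ZIdx m s} :
    v = zidx m s i j ↔ v.1.val = i ∧ v.2.val = j := by
  obtain ⟨⟨i', hi'⟩, ⟨j', hj'⟩⟩ := v
  rw [zidx, dif_pos ⟨hi, hj⟩]
  constructor
  · rintro ⟨⟩; exact ⟨rfl, rfl⟩
  · rintro ⟨rfl, rfl⟩; rfl

structure Admissible (m : ℕ) (s : ℕ → ℕ) : Prop where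
  pos : ∀ t, 1 ≤ t → t ≤ m → 1 ≤ s t
  last : s (m + 1) = 0

theorem admissible_sfun {β : ℕ → ℕ} (hβ : ∀ t, 1 ≤ t → t ≤ m → 2 ≤ β t) :
    Admissible m (sfun m β) where
  pos t h1 h2 := by have := hβ t h1 h2; simp only [sfun, if_pos h2]; omega
  last := by simp [sfun]

/-- The variable `𝗓_{k+1, s_{k+1}}`; the shift makes `k` range over `0, …, m` like the index `a`
of the variables `𝗓_{a,0}`. -/
abbrev lastIdx (m : ℕ) (s : ℕ → ℕ) (k : ℕ) : ZIdx m s := zidx m s (k + 1) (s (k + 1))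

def IsLast (v : ZIdx m s) : Prop := 1 ≤ v.1.val ∧ v.2.val = s v.1.val

instance : DecidablePred (IsLast (m := m) (s := s)) :=
  fun _ => inferInstanceAs (Decidable (_ ∧ _))

namespace Admissible

theorem lt_nj (hs : Admissible m s) {i j : ℕ} (hi : i ≤ m + 1) (hj : j = 0 ∨ 1 ≤ i ∧ j ≤ s i) :
    j < nj m s i := by
  have := hs.last
  unfold nj
  split_ifs with h
  · rcases h with rfl | rfl <;> omega
  · omega

theorem eq_zidx_iff' (hs : Admissible m s) {i j : ℕ} (hi : i ≤ m + 1)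
    (hj : j = 0 ∨ 1 ≤ i ∧ j ≤ s i) {v : ZIdx m s} :
    v = zidx m s i j ↔ v.1.val = i ∧ v.2.val = j :=
  eq_zidx_iff (by omega) (hs.lt_nj hi hj)

theorem eq_lastIdx_iff (hs : Admissible m s) {k : ℕ} (hk : k ≤ m) {v : ZIdx m s} :
    v = lastIdx m s k ↔ v.1.val = k + 1 ∧ v.2.val = s (k + 1) :=
  hs.eq_zidx_iff' (by omega) (.inr ⟨by omega, le_rfl⟩)

theorem isLast_iff (hs : Admissible m s) {v : ZIdx m s} :
    IsLast v ↔ ∃ k ≤ m, v = lastIdx m s k := by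
  constructor
  · rintro ⟨h1, h2⟩
    refine ⟨v.1.val - 1, by omega, (hs.eq_lastIdx_iff (by omega)).2 ⟨by omega, ?_⟩⟩
    rw [h2]; congr 1; omega
  · rintro ⟨k, hk, rfl⟩
    obtain ⟨h1, h2⟩ := (hs.eq_lastIdx_iff hk).1 rfl
    exact ⟨by omega, h2.trans (congrArg s h1.symm)⟩

theorem not_isLast_zidx_zero (hs : Admissible m s) {a : ℕ} (ha : a ≤ m) :
    ¬IsLast (zidx m s a 0) := by
  obtain ⟨h1, h2⟩ := (hs.eq_zidx_iff' (by omega) (.inl rfl)).1 (rfl : zidx m s a 0 = _)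
  rintro ⟨hl1, hl2⟩
  have := congrArg s h1
  have := hs.pos a
  omega

theorem cases_zidx (hs : Admissible m s) (v : ZIdx m s) :
    (∃ a ≤ m, v = zidx m s a 0) ∨ (∃ k ≤ m, v = lastIdx m s k) ∨
      ∃ t u, 1 ≤ t ∧ t ≤ m ∧ 1 ≤ u ∧ u < s t ∧ v = zidx m s t u := by
  obtain ⟨⟨i, hi⟩, ⟨j, hj⟩⟩ := v
  have hs2 := hs.last
  by_cases hlast : 1 ≤ i ∧ j = s i
  · exact .inr (.inl ((hs.isLast_iff (v := ⟨⟨i, hi⟩, ⟨j, hj⟩⟩)).1 hlast))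
  have hrow : i ≤ m ∧ (j = 0 ∨ 1 ≤ i ∧ j < s i) := by
    have hj' : j < nj m s i := hj
    unfold nj at hj'
    split_ifs at hj' with h
    · rcases h with rfl | rfl <;> omega
    · omega
  by_cases hj0 : j = 0
  · exact .inl ⟨i, hrow.1, (hs.eq_zidx_iff' (by omega) (.inl rfl)).2 ⟨rfl, hj0⟩⟩
  · refine .inr (.inr ⟨i, j, by omega, hrow.1, by omega, by omega, ?_⟩)
    exact (hs.eq_zidx_iff' (by omega) (.inr ⟨by omega, by omega⟩)).2 ⟨rfl, rfl⟩

theorem not_isLast_zidx_of_lt (hs : Admissible m s) {t u : ℕ} (ht1 : 1 ≤ t) (ht2 : t ≤ m)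
    (hu : u < s t) : ¬IsLast (zidx m s t u) := by
  rintro ⟨-, h⟩
  have h1 := (hs.eq_zidx_iff' (by omega) (.inr ⟨ht1, hu.le⟩)).1 (rfl : zidx m s t u = _)
  have := congrArg s h1.1
  omega

theorem pos_zidx (hs : Admissible m s) {i j : ℕ} (hi : i ≤ m + 1) (hj : j = 0 ∨ 1 ≤ i ∧ j ≤ s i) :
    ((zidx m s i j).1.val, (zidx m s i j).2.val) = (i, j) :=
  Prod.ext_iff.2 ((hs.eq_zidx_iff' hi hj).1 rfl)

end Admissible

theorem prod_Icc_mul_prod_Icc {M : Type*} [CommMonoid M] (w : ℕ → M) {a b : ℕ} (hab : a ≤ b) :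
    (∏ t ∈ Finset.Icc 1 a, w t) * ∏ t ∈ Finset.Icc (a + 1) b, w t = ∏ t ∈ Finset.Icc 1 b, w t := by
  simpa only [← Finset.Icc_add_one_left_eq_Ioc, zero_add] using
    Finset.prod_Ioc_consecutive w (Nat.zero_le a) hab

noncomputable def rowProd (s : ℕ → ℕ) (t : ℕ) : MvPolynomial (ℕ × ℕ) ℂ :=
  ∏ u ∈ Finset.Icc 1 (s t - 1), X (t, u)

noncomputable def rowExp (s : ℕ → ℕ) (t : ℕ) : ℕ × ℕ →₀ ℕ :=
  ∑ u ∈ Finset.Icc 1 (s t - 1), Finsupp.single (t, u) 1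

noncomputable def lastExp (s : ℕ → ℕ) (k : ℕ) : ℕ × ℕ →₀ ℕ :=
  Finsupp.single (1, s 1) 1 + Finsupp.single (k, 0) 1 + ∑ t ∈ Finset.Icc 1 k, rowExp s t

noncomputable def paramExp (v : ZIdx m s) : ℕ × ℕ →₀ ℕ :=
  if IsLast v then lastExp s (v.1.val - 1) else Finsupp.single (v.1.val, v.2.val) 1

noncomputable abbrev paramExponent : (ZIdx m s →₀ ℕ) →ₗ[ℕ] ℕ × ℕ →₀ ℕ :=
  Finsupp.linearCombination ℕ paramExp

/-- The monomial map `𝗓_{a,0} ↦ X_{a,0}`, `𝗓_{t,u} ↦ X_{t,u}` (`0 < u < s_t`) and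
`𝗓_{k+1,s_{k+1}} ↦ X_{1,s_1} X_{k,0} ∏_{t ≤ k} W_t`, which kills every quasiminor. -/
noncomputable def param (m : ℕ) (s : ℕ → ℕ) : CZ m s →ₐ[ℂ] MvPolynomial (ℕ × ℕ) ℂ :=
  aeval fun v => monomial (paramExp v) 1

theorem monomial_rowExp (t : ℕ) : monomial (rowExp s t) (1 : ℂ) = rowProd s t := by
  rw [rowExp, monomial_sum_one]
  rfl

theorem monomial_lastExp (k : ℕ) :
    monomial (lastExp s k) (1 : ℂ) = X (1, s 1) * X (k, 0) * ∏ t ∈ Finset.Icc 1 k, rowProd s t := by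
  simp only [lastExp, X, ← monomial_rowExp, ← monomial_sum_one, monomial_mul, mul_one]

theorem param_X_of_not_isLast {v : ZIdx m s} (hv : ¬IsLast v) :
    param m s (X v) = X (v.1.val, v.2.val) := by
  rw [param, aeval_X, paramExp, if_neg hv]
  rfl

theorem param_Zv_of_not_isLast (hs : Admissible m s) {i j : ℕ} (hi : i ≤ m + 1)
    (hj : j = 0 ∨ 1 ≤ i ∧ j ≤ s i) (hlast : ¬IsLast (zidx m s i j)) :
    param m s (Zv m s i j) = X (i, j) := by
  rw [Zv, param_X_of_not_isLast hlast, hs.pos_zidx hi hj]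

theorem param_Zv_zero (hs : Admissible m s) {a : ℕ} (ha : a ≤ m) :
    param m s (Zv m s a 0) = X (a, 0) :=
  param_Zv_of_not_isLast hs (by omega) (.inl rfl) (hs.not_isLast_zidx_zero ha)

theorem param_Wq (hs : Admissible m s) {t : ℕ} (ht1 : 1 ≤ t) (ht2 : t ≤ m) :
    param m s (Wq m s t) = rowProd s t := by
  rw [Wq, map_prod]
  refine Finset.prod_congr rfl fun u hu => ?_
  have hu := Finset.mem_Icc.1 hu
  have := hs.pos t ht1 ht2
  exact param_Zv_of_not_isLast hs (by omega) (.inr ⟨ht1, by omega⟩)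
    (hs.not_isLast_zidx_of_lt ht1 ht2 (by omega))

theorem param_Zv_last (hs : Admissible m s) {k : ℕ} (hk : k ≤ m) :
    param m s (Zv m s (k + 1) (s (k + 1)))
      = X (1, s 1) * X (k, 0) * ∏ t ∈ Finset.Icc 1 k, rowProd s t := by
  have hlast : IsLast (lastIdx m s k) := (hs.isLast_iff).2 ⟨k, hk, rfl⟩
  have hpos := hs.pos_zidx (i := k + 1) (j := s (k + 1)) (by omega) (.inr ⟨by omega, le_rfl⟩)
  rw [Zv, param, aeval_X, paramExp, if_pos hlast, ← monomial_lastExp]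
  congr
  simp only [Prod.ext_iff] at hpos
  omega

theorem param_qm (hs : Admissible m s) {a b : ℕ} (hab : a < b) (hb : b ≤ m) :
    param m s (qm m s (a + 1) (b + 1)) = 0 := by
  have hW : ∀ t ∈ Finset.Icc (a + 1) b, param m s (Wq m s t) = rowProd s t := fun t ht =>
    param_Wq hs (by simp at ht; omega) (by simp at ht; omega)
  simp only [qm, Nat.add_sub_cancel, map_sub, map_mul, map_prod, Finset.prod_congr rfl hW,
    param_Zv_zero hs hb, param_Zv_zero hs (hab.le.trans hb), param_Zv_last hs hb,
    param_Zv_last hs (hab.le.trans hb)]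
  rw [sub_eq_zero, ← prod_Icc_mul_prod_Icc (rowProd s) hab.le]
  ring

theorem le_ker_param (hs : Admissible m s) : QDet m s ≤ RingHom.ker (param m s) := by
  rw [QDet, Ideal.span_le]
  rintro _ ⟨i, j, hi, hij, hj, rfl⟩
  obtain ⟨a, rfl⟩ : ∃ a, i = a + 1 := ⟨i - 1, by omega⟩
  obtain ⟨b, rfl⟩ : ∃ b, j = b + 1 := ⟨j - 1, by omega⟩
  exact param_qm hs (by omega) (by omega)

theorem rowExp_apply (t : ℕ) (p : ℕ × ℕ) :
    rowExp s t p = if p.1 = t ∧ 1 ≤ p.2 ∧ p.2 ≤ s t - 1 then 1 else 0 := by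
  obtain ⟨i, j⟩ := p
  by_cases hi : i = t
  · subst hi
    simp [rowExp, Finsupp.finsetSum_apply, Finsupp.single_apply]
  · simp [rowExp, Finsupp.finsetSum_apply, hi]

theorem lastExp_apply (k : ℕ) (p : ℕ × ℕ) :
    lastExp s k p = (if p = (1, s 1) then 1 else 0) + (if p = (k, 0) then 1 else 0)
      + if 1 ≤ p.1 ∧ p.1 ≤ k ∧ 1 ≤ p.2 ∧ p.2 ≤ s p.1 - 1 then 1 else 0 := by
  obtain ⟨i, j⟩ := p
  simp only [lastExp, Finsupp.add_apply, Finsupp.finsetSum_apply, rowExp_apply,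
    Finsupp.single_apply, eq_comm (a := ((_ : ℕ), (_ : ℕ))) (b := (i, j))]
  congr 1
  simp only [ite_and, Finset.sum_ite_eq, Finset.mem_Icc]

theorem paramExp_apply (v : ZIdx m s) (p : ℕ × ℕ) :
    paramExp v p = if IsLast v then lastExp s (v.1.val - 1) p
      else if (v.1.val, v.2.val) = p then 1 else 0 := by
  rw [paramExp]
  split_ifs <;> simp_all

theorem paramExp_apply_zero (hs : Admissible m s) {k : ℕ} (hk : k ≤ m) (v : ZIdx m s) :
    paramExp v (k, 0)
      = (if v = zidx m s k 0 then 1 else 0) + if v = lastIdx m s k then 1 else 0 := by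
  simp only [hs.eq_zidx_iff' (by omega : k ≤ m + 1) (.inl rfl), hs.eq_lastIdx_iff hk]
  have := hs.pos 1
  have := hs.pos v.1.val
  simp only [paramExp_apply, IsLast, lastExp_apply, Prod.ext_iff]
  split_ifs <;> grind

theorem paramExp_apply_last (hs : Admissible m s) (v : ZIdx m s) :
    paramExp v (1, s 1) = if IsLast v then 1 else 0 := by
  have := hs.pos 1
  have := hs.pos v.1.val
  simp only [paramExp_apply, IsLast, lastExp_apply, Prod.ext_iff]
  split_ifs <;> grind

theorem paramExp_apply_mid (hs : Admissible m s) {t u : ℕ} (ht1 : 1 ≤ t) (ht2 : t ≤ m)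
    (hu1 : 1 ≤ u) (hu2 : u < s t) (v : ZIdx m s) :
    paramExp v (t, u)
      = (if v = zidx m s t u then 1 else 0) + if IsLast v ∧ t < v.1.val then 1 else 0 := by
  simp only [hs.eq_zidx_iff' (by omega : t ≤ m + 1) (.inr ⟨ht1, hu2.le⟩)]
  have := hs.pos v.1.val
  simp only [paramExp_apply, IsLast, lastExp_apply, Prod.ext_iff]
  split_ifs <;> grind

theorem paramExponent_apply_zero (hs : Admissible m s) {k : ℕ} (hk : k ≤ m)
    (d : ZIdx m s →₀ ℕ) :
    paramExponent d (k, 0) = d (zidx m s k 0) + d (lastIdx m s k) := by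
  simp [Finsupp.linearCombination_apply_apply_eq_sum, paramExp_apply_zero hs hk, mul_add,
    Finset.sum_add_distrib]

theorem paramExponent_apply_last (hs : Admissible m s) (d : ZIdx m s →₀ ℕ) :
    paramExponent d (1, s 1) = ∑ k ∈ Finset.range (m + 1), d (lastIdx m s k) := by
  simp only [Finsupp.linearCombination_apply_apply_eq_sum, paramExp_apply_last hs, mul_boole,
    ← Finset.sum_filter]
  have hinv : ∀ v ∈ Finset.univ.filter IsLast, lastIdx m s (v.1.val - 1) = v := fun v hv => by
    obtain ⟨k, hk, rfl⟩ := hs.isLast_iff.1 (Finset.mem_filter.1 hv).2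
    rw [((hs.eq_lastIdx_iff hk).1 rfl).1]
    rfl
  refine Finset.sum_nbij' (fun v => v.1.val - 1) (lastIdx m s) (fun v _ => ?_) (fun k hk => ?_) hinv
    (fun k hk => ?_) (fun v hv => by rw [hinv v hv])
  · simp only [Finset.mem_range]
    omega
  · simp only [Finset.mem_range] at hk
    simp only [Finset.mem_filter, Finset.mem_univ, true_and, hs.isLast_iff]
    exact ⟨k, by omega, rfl⟩
  · simp only [Finset.mem_range] at hk
    simp only [((hs.eq_lastIdx_iff (by omega : k ≤ m)).1 rfl).1]
    omega

theorem paramExponent_apply_mid (hs : Admissible m s) {t u : ℕ} (ht1 : 1 ≤ t) (ht2 : t ≤ m)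
    (hu1 : 1 ≤ u) (hu2 : u < s t) (d : ZIdx m s →₀ ℕ) :
    paramExponent d (t, u)
      = d (zidx m s t u) + ∑ v, if IsLast v ∧ t < v.1.val then d v else 0 := by
  simp [Finsupp.linearCombination_apply_apply_eq_sum, paramExp_apply_mid hs ht1 ht2 hu1 hu2,
    mul_add, Finset.sum_add_distrib]

/-- No leading term `𝗓_{a,0} 𝗓_{k+1,s_{k+1}}` (`a < k`) of a quasiminor divides `𝗓^d`. -/
def IsNormal (d : ZIdx m s →₀ ℕ) : Prop :=
  ∀ a ≤ m, ∀ k ≤ m, d (zidx m s a 0) ≠ 0 → d (lastIdx m s k) ≠ 0 → k ≤ a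

theorem injOn_paramExponent (hs : Admissible m s) :
    Set.InjOn (paramExponent (m := m) (s := s)) {d | IsNormal d} := by
  intro d hd e he h
  have hx : ∀ k ≤ m,
      d (zidx m s k 0) + d (lastIdx m s k) = e (zidx m s k 0) + e (lastIdx m s k) := fun k hk => by
    rw [← paramExponent_apply_zero hs hk, ← paramExponent_apply_zero hs hk, h]
  have htot := paramExponent_apply_last hs d
  rw [h, paramExponent_apply_last hs] at htot
  have hy : ∀ k ≤ m, d (lastIdx m s k) = e (lastIdx m s k) := fun k hk =>
    eq_of_sum_range_eq_of_add_eq (n := m + 1) (α := fun a => d (zidx m s a 0))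
      (α' := fun a => e (zidx m s a 0)) (fun k hk => hx k (by omega)) htot.symm
      (fun a ha k hk => hd a (by omega) k (by omega))
      (fun a ha k hk => he a (by omega) k (by omega)) k (by omega)
  have hlast : ∀ v, IsLast v → d v = e v := fun v hv => by
    obtain ⟨k, hk, rfl⟩ := hs.isLast_iff.1 hv
    exact hy k hk
  ext v
  rcases hs.cases_zidx v with ⟨a, ha, rfl⟩ | ⟨k, hk, rfl⟩ | ⟨t, u, ht1, ht2, hu1, hu2, rfl⟩
  · have := hx a ha
    have := hy a ha
    omega
  · exact hy k hk
  · have htail : (∑ v, if IsLast v ∧ t < v.1.val then d v else 0)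
        = ∑ v, if IsLast v ∧ t < v.1.val then e v else 0 :=
      Finset.sum_congr rfl fun v _ => by split_ifs with hv; exacts [hlast v hv.1, rfl]
    have := paramExponent_apply_mid hs ht1 ht2 hu1 hu2 d
    rw [h, paramExponent_apply_mid hs ht1 ht2 hu1 hu2, htail] at this
    omega

noncomputable def wqExp (m : ℕ) (s : ℕ → ℕ) (t : ℕ) : ZIdx m s →₀ ℕ :=
  ∑ u ∈ Finset.Icc 1 (s t - 1), Finsupp.single (zidx m s t u) 1

theorem Wq_eq_monomial (t : ℕ) : Wq m s t = monomial (wqExp m s t) 1 := by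
  rw [Wq, wqExp, monomial_sum_one]
  rfl

/-- Rewriting a leading term `𝗓_{a,0} 𝗓_{k+1,s_{k+1}}` (`a < k`) by its quasiminor moves one unit of
exponent from `𝗓_{a,0}` to `𝗓_{k,0}`, so this weight drops by `k - a`. -/
def xWeight (v : ZIdx m s) : ℕ := if IsLast v ∨ v.2.val ≠ 0 then 0 else m - v.1.val

theorem xWeight_zidx_zero (hs : Admissible m s) {a : ℕ} (ha : a ≤ m) :
    xWeight (zidx m s a 0) = m - a := by
  obtain ⟨h1, h2⟩ := (hs.eq_zidx_iff' (by omega) (.inl rfl)).1 (rfl : zidx m s a 0 = _)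
  rw [xWeight, if_neg (by simp [hs.not_isLast_zidx_zero ha, h2]), h1]

theorem xWeight_lastIdx (hs : Admissible m s) {k : ℕ} (hk : k ≤ m) : xWeight (lastIdx m s k) = 0 :=
  if_pos (.inl (hs.isLast_iff.2 ⟨k, hk, rfl⟩))

theorem weight_wqExp (hs : Admissible m s) {t : ℕ} (ht1 : 1 ≤ t) (ht2 : t ≤ m) :
    Finsupp.weight xWeight (wqExp m s t) = 0 := by
  rw [wqExp, map_sum]
  refine Finset.sum_eq_zero fun u hu => ?_
  have hu := Finset.mem_Icc.1 hu
  have := hs.pos t ht1 ht2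
  have hu0 : (zidx m s t u).2.val ≠ 0 := by
    rw [((hs.eq_zidx_iff' (by omega) (.inr ⟨ht1, by omega⟩)).1 rfl).2]
    omega
  rw [Finsupp.weight_single, one_smul, xWeight, if_pos (.inr hu0)]

theorem exists_weight_lt_sub_mem (hs : Admissible m s) {d : ZIdx m s →₀ ℕ} (hd : ¬IsNormal d) :
    ∃ d', Finsupp.weight xWeight d' < Finsupp.weight xWeight d ∧
      monomial d (1 : ℂ) - monomial d' 1 ∈ QDet m s := by
  simp only [IsNormal, not_forall, not_le] at hd
  obtain ⟨a, ha, k, hk, hda, hdk, hak⟩ := hd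
  have hne : zidx m s a 0 ≠ lastIdx m s k := fun h =>
    hs.not_isLast_zidx_zero ha (h ▸ hs.isLast_iff.2 ⟨k, hk, rfl⟩)
  obtain ⟨d0, rfl⟩ : ∃ d0,
      d = Finsupp.single (zidx m s a 0) 1 + Finsupp.single (lastIdx m s k) 1 + d0 := by
    refine exists_add_of_le fun v => ?_
    simp only [Finsupp.add_apply, Finsupp.single_apply]
    split_ifs with h1 h2 <;> subst_vars <;> first | omega | exact absurd h2.symm hne
  refine ⟨Finsupp.single (lastIdx m s a) 1 + ∑ t ∈ Finset.Icc (a + 1) k, wqExp m s t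
    + Finsupp.single (zidx m s k 0) 1 + d0, ?_, ?_⟩
  · have hrow : ∀ t ∈ Finset.Icc (a + 1) k, Finsupp.weight xWeight (wqExp m s t) = 0 := fun t ht =>
      weight_wqExp hs (by simp at ht; omega) (by simp at ht; omega)
    simp only [map_add, map_sum, Finset.sum_eq_zero hrow, Finsupp.weight_single, one_smul,
      xWeight_zidx_zero hs ha, xWeight_zidx_zero hs hk, xWeight_lastIdx hs hk,
      xWeight_lastIdx hs (hak.le.trans hk)]
    omega
  · have hq : qm m s (a + 1) (k + 1) ∈ QDet m s :=
      Ideal.subset_span ⟨a + 1, k + 1, by omega, by omega, by omega, rfl⟩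
    convert Ideal.mul_mem_right (monomial d0 (1 : ℂ)) _ hq using 1
    simp only [qm, Nat.add_sub_cancel, Zv, Wq_eq_monomial, X, ← monomial_sum_one, monomial_mul,
      mul_one, sub_mul]

theorem eq_ker_param (hs : Admissible m s) : QDet m s = RingHom.ker (param m s) :=
  (ker_aeval_monomial_one_eq _ (le_ker_param hs) (injOn_paramExponent hs)
    (exists_monomial_sub_mem_of_decreasing _ fun _ hd => exists_weight_lt_sub_mem hs hd)).symm

end QDet

theorem quotient_by_QDet_isDomain_general
    (m : ℕ) (β : ℕ → ℕ) (hβ : ∀ t, 1 ≤ t → t ≤ m → 2 ≤ β t) :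
    IsDomain (CZ m (sfun m β) ⧸ QDet m (sfun m β)) := by
  have : (QDet m (sfun m β)).IsPrime := by
    rw [QDet.eq_ker_param (QDet.admissible_sfun hβ)]
    exact RingHom.ker_isPrime _
  exact Ideal.Quotient.isDomain _

/-- the quotient ring `ℂ[𝗓]/QDet(𝗓)` is an integral domain. -/
theorem quotient_by_QDet_isDomain
    (m : ℕ) (hm : 1 ≤ m) (β : ℕ → ℕ) (hβ : ∀ t, 1 ≤ t → t ≤ m → 2 ≤ β t) :
    IsDomain (CZ m (sfun m β) ⧸ QDet m (sfun m β)) :=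
  quotient_by_QDet_isDomain_general m β hβ
end

section
/- Let R := ℂ[c, a, k]/(c·k − c·a²). Then the localization of R at the maximal ideal generated by the classes of c, a, k is a Noetherian local ring of Krull dimension 2 whose maximal ideal cannot be generated by 2 elements; in particular this local ring is not regular. (R is the coordinate ring of the chart U_0 = (a_1 ≠ 0) of Rep(A_{3,1,0}, δ)//_{ϑ₂}GL for the group 1/3(1,1) with the generic stability condition ϑ₂ = (1,−1); its singularity shows that for stability parameters other than ϑ = (−n,1,…,1) the simultaneous resolution of Theorem 5.10 can fail.) -/
/-!
The origin lies on both components `{c = 0}` and `{k = a²}` of the hypersurface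
`{c(k - a²) = 0}`. The chain of primes `(c) ⊂ (c, a) ⊂ (c, a, k)` gives height at least 2, and
the equation `c(k - a²)`, a non-zero-divisor of `ℂ[c, a, k]`, cuts the dimension down to at
most 2. Since the equation lies in the square of the ideal of the origin, the first-order
Taylor expansion `p ↦ (p(0), ∇p(0))`, with values in the square-zero extension `ℂ ⊕ ℂ³`,
factors through the local ring and sends its maximal ideal onto all of `ℂ³`; two generators
would span `ℂ³`.
-/

open MvPolynomial

/-- The coordinate ring `R = ℂ[c,a,k]/(c·k − c·a²)` of the chart `U_0 = (a_1 ≠ 0)` of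
`Rep(A_{3,1,0}, δ)//_{ϑ₂}GL` for the group `1/3(1,1)` with the generic stability condition
`ϑ₂ = (1,−1)`.  The variables `c, a, k` are `X 0, X 1, X 2`. -/
noncomputable abbrev chartRing : Type :=
  MvPolynomial (Fin 3) ℂ ⧸
    Ideal.span {(X 0 * X 2 - X 0 * X 1 ^ 2 : MvPolynomial (Fin 3) ℂ)}

/-- The ideal of `R` generated by the classes of `c`, `a`, `k`, corresponding to the origin
of the hypersurface `{ck = ca²} ⊂ 𝔸³`. -/
noncomputable def originIdeal : Ideal chartRing :=
  Ideal.span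
    {Ideal.Quotient.mk _ (X 0), Ideal.Quotient.mk _ (X 1), Ideal.Quotient.mk _ (X 2)}

namespace MvPolynomial

variable {σ R : Type*} [CommRing R]

lemma mem_idealOfVars_iff {p : MvPolynomial σ R} :
    p ∈ idealOfVars σ R ↔ constantCoeff p = 0 := by
  rw [← pow_one (idealOfVars σ R), mem_pow_idealOfVars_iff', constantCoeff_eq]
  simp only [Nat.lt_one_iff, Finsupp.degree_eq_zero_iff, forall_eq]

lemma ker_constantCoeff :
    RingHom.ker (constantCoeff : MvPolynomial σ R →+* R) = idealOfVars σ R :=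
  Ideal.ext fun _ => mem_idealOfVars_iff.symm

noncomputable def killVars (s : Set σ) : MvPolynomial σ R →ₐ[R] MvPolynomial σ R :=
  aeval (sᶜ.indicator X)

@[simp]
lemma killVars_X_of_mem {s : Set σ} {i : σ} (hi : i ∈ s) :
    killVars s (X i : MvPolynomial σ R) = 0 := by
  simp [killVars, hi]

@[simp]
lemma killVars_X_of_notMem {s : Set σ} {i : σ} (hi : i ∉ s) :
    killVars s (X i : MvPolynomial σ R) = X i := by
  simp [killVars, hi]

lemma killVars_comp_killVars {s t : Set σ} (hst : s ⊆ t) :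
    (killVars t).comp (killVars s) = (killVars t : MvPolynomial σ R →ₐ[R] _) := by
  ext i : 1
  by_cases hi : i ∈ s
  · simp [hi, hst hi]
  · simp [hi]

lemma ker_killVars_lt [Nontrivial R] {s t : Set σ} (hst : s ⊂ t) :
    RingHom.ker (killVars s : MvPolynomial σ R →ₐ[R] _) < RingHom.ker (killVars t) := by
  obtain ⟨i, hit, his⟩ := Set.exists_of_ssubset hst
  refine SetLike.lt_iff_le_and_exists.2 ⟨fun p hp => ?_, X i, ?_, ?_⟩
  · rw [RingHom.mem_ker] at hp ⊢
    rw [← killVars_comp_killVars hst.subset, AlgHom.comp_apply, hp, map_zero]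
  · simp [hit]
  · simp [his, X_ne_zero]

lemma ker_killVars_univ :
    RingHom.ker (killVars Set.univ : MvPolynomial σ R →ₐ[R] _) = idealOfVars σ R := by
  ext p
  rw [RingHom.mem_ker, killVars, Set.compl_univ, Set.indicator_empty, aeval_zero', algebraMap_eq,
    C_eq_zero, mem_idealOfVars_iff]

end MvPolynomial

namespace TrivSqZeroExt

variable {R M : Type*} [CommRing R] [AddCommGroup M] [Module R M] [Module Rᵐᵒᵖ M]
  [IsCentralScalar R M]

variable {s : Set (TrivSqZeroExt R M)} {z : TrivSqZeroExt R M}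

lemma fst_eq_zero_of_mem_ideal_span (hs : ∀ x ∈ s, fst x = 0) (hz : z ∈ Ideal.span s) :
    fst z = 0 :=
  (Ideal.span_le (I := RingHom.ker (fstHom R R M))).2 hs hz

lemma snd_mem_span_of_mem_ideal_span (hs : ∀ x ∈ s, fst x = 0) (hz : z ∈ Ideal.span s) :
    snd z ∈ Submodule.span R (snd '' s) := by
  induction hz using Submodule.span_induction with
  | mem x hx => exact Submodule.subset_span ⟨x, hx, rfl⟩
  | zero => simp
  | add x y _ _ hx hy => simpa using add_mem hx hy
  | smul a x hx ih =>
    rw [smul_eq_mul, snd_mul, fst_eq_zero_of_mem_ideal_span hs hx, MulOpposite.op_zero,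
      zero_smul, add_zero]
    exact Submodule.smul_mem _ _ ih

lemma card_le_card_of_inr_mem_ideal_span {K V ι : Type*} [Field K] [AddCommGroup V] [Module K V]
    [Module Kᵐᵒᵖ V] [IsCentralScalar K V] [Fintype ι] (b : Module.Basis ι K V)
    (s : Finset (TrivSqZeroExt K V)) (hs : ∀ x ∈ s, fst x = 0)
    (hb : ∀ i, inr (b i) ∈ Ideal.span (s : Set (TrivSqZeroExt K V))) :
    Fintype.card ι ≤ s.card := by
  classical
  have hspan : Submodule.span K (snd '' (s : Set (TrivSqZeroExt K V))) = ⊤ :=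
    eq_top_iff.2 <| b.span_eq.symm.le.trans <| Submodule.span_le.2 <| Set.range_subset_iff.2
      fun i => by simpa using snd_mem_span_of_mem_ideal_span hs (hb i)
  calc Fintype.card ι = Module.finrank K V := (Module.finrank_eq_card_basis b).symm
    _ = ((s.image snd : Finset V) : Set V).finrank K := by
      rw [Finset.coe_image, Set.finrank, hspan, finrank_top]
    _ ≤ (s.image snd).card := finrank_span_finset_le_card _
    _ ≤ s.card := Finset.card_image_le

end TrivSqZeroExt

namespace MvPolynomial

variable (σ R : Type*) [CommRing R] [DecidableEq σ]

noncomputable def jetAtZero : MvPolynomial σ R →ₐ[R] TrivSqZeroExt R (σ → R) :=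
  aeval fun i => TrivSqZeroExt.inr (Pi.single i 1)

variable {σ R}

@[simp]
lemma jetAtZero_X (i : σ) : jetAtZero σ R (X i) = TrivSqZeroExt.inr (Pi.single i 1) := by
  simp [jetAtZero]

lemma fst_jetAtZero (p : MvPolynomial σ R) : (jetAtZero σ R p).fst = constantCoeff p := by
  rw [← TrivSqZeroExt.fstHom_apply (S := R), ← AlgHom.comp_apply, jetAtZero, comp_aeval]
  simp

end MvPolynomial

open IsLocalRing

lemma Ideal.map_lt_map_of_surjective {R S : Type*} [CommRing R] [CommRing S] {f : R →+* S}
    (hf : Function.Surjective f) {I J : Ideal R} (hI : RingHom.ker f ≤ I) (h : I < J) :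
    I.map f < J.map f := by
  refine lt_of_le_of_ne (Ideal.map_mono h.le) fun e => h.ne ?_
  have := congrArg (Ideal.comap f) e
  rwa [Ideal.comap_map_of_surjective' f hf, Ideal.comap_map_of_surjective' f hf,
    sup_of_le_left hI, sup_of_le_left (hI.trans h.le)] at this

noncomputable abbrev chartMk : MvPolynomial (Fin 3) ℂ →+* chartRing := Ideal.Quotient.mk _

lemma chartMk_surjective : Function.Surjective chartMk := Ideal.Quotient.mk_surjective

lemma ker_chartMk_le {I : Ideal (MvPolynomial (Fin 3) ℂ)} (h : X 0 * X 2 - X 0 * X 1 ^ 2 ∈ I) :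
    RingHom.ker chartMk ≤ I := by
  rwa [Ideal.mk_ker, Ideal.span_singleton_le_iff_mem]

lemma originIdeal_eq_map : originIdeal = (idealOfVars (Fin 3) ℂ).map chartMk := by
  rw [originIdeal, idealOfVars, Ideal.map_span, ← Set.range_comp]
  congr 1
  ext
  simp [Fin.exists_fin_succ, eq_comm]

instance originIdeal_isMaximal : originIdeal.IsMaximal := by
  have : (idealOfVars (Fin 3) ℂ).IsMaximal := by
    rw [← ker_constantCoeff]
    exact RingHom.ker_isMaximal_of_surjective _ fun a => ⟨C a, constantCoeff_C _ a⟩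
  rw [originIdeal_eq_map]
  exact Ideal.IsMaximal.map_of_surjective_of_ker_le chartMk_surjective
    (ker_chartMk_le (mem_idealOfVars_iff.2 (by simp)))

/-- The ideal `(X i, i ∈ s)` of `chartRing`, presented as the image of a kernel so that primality
comes for free. -/
noncomputable def chartVarIdeal (s : Set (Fin 3)) : Ideal chartRing :=
  (RingHom.ker (killVars s : MvPolynomial (Fin 3) ℂ →ₐ[ℂ] _)).map chartMk

lemma ker_chartMk_le_ker_killVars {s : Set (Fin 3)} (hs : 0 ∈ s) :
    RingHom.ker chartMk ≤ RingHom.ker (killVars s : MvPolynomial (Fin 3) ℂ →ₐ[ℂ] _) :=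
  ker_chartMk_le (by simp [hs])

lemma chartVarIdeal_isPrime {s : Set (Fin 3)} (hs : 0 ∈ s) : (chartVarIdeal s).IsPrime :=
  have := RingHom.ker_isPrime (killVars s : MvPolynomial (Fin 3) ℂ →ₐ[ℂ] _)
  Ideal.map_isPrime_of_surjective chartMk_surjective (ker_chartMk_le_ker_killVars hs)

lemma chartVarIdeal_lt {s t : Set (Fin 3)} (hs : 0 ∈ s) (hst : s ⊂ t) :
    chartVarIdeal s < chartVarIdeal t :=
  Ideal.map_lt_map_of_surjective chartMk_surjective (ker_chartMk_le_ker_killVars hs)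
    (ker_killVars_lt hst)

lemma chartVarIdeal_univ : chartVarIdeal Set.univ = originIdeal := by
  rw [chartVarIdeal, ker_killVars_univ, originIdeal_eq_map]

lemma two_le_height_originIdeal : 2 ≤ originIdeal.height := by
  have := chartVarIdeal_isPrime (s := {0}) rfl
  have := chartVarIdeal_isPrime (s := {0, 1}) (by simp)
  have h01 : chartVarIdeal {0} < chartVarIdeal {0, 1} :=
    chartVarIdeal_lt rfl (Set.ssubset_iff_of_subset (by simp) |>.2 ⟨1, by simp⟩)
  have h1u : chartVarIdeal {0, 1} < originIdeal := by
    rw [← chartVarIdeal_univ]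
    exact chartVarIdeal_lt (by simp) (Set.ssubset_iff_of_subset (by simp) |>.2 ⟨2, by simp⟩)
  calc (2 : ℕ∞) = 0 + 1 + 1 := by norm_num
    _ ≤ (chartVarIdeal {0}).height + 1 + 1 := by gcongr; positivity
    _ ≤ (chartVarIdeal {0, 1}).height + 1 := by
      gcongr; exact Ideal.height_add_one_le_of_lt_of_isPrime h01
    _ ≤ originIdeal.height := Ideal.height_add_one_le_of_lt_of_isPrime h1u

lemma ringKrullDim_chartRing_le : ringKrullDim chartRing ≤ 2 := by
  have hf : (X 0 * X 2 - X 0 * X 1 ^ 2 : MvPolynomial (Fin 3) ℂ) ∈ nonZeroDivisors _ :=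
    mem_nonZeroDivisors_of_ne_zero fun h => by simpa using congrArg (eval ![1, 0, 1]) h
  have h := ringKrullDim_quotient_succ_le_of_nonZeroDivisor hf
  rw [MvPolynomial.ringKrullDim_of_isNoetherianRing, ringKrullDim_eq_zero_of_field,
    Nat.card_eq_fintype_card, Fintype.card_fin, zero_add] at h
  exact ENat.WithBot.add_le_add_natCast_right_iff.mp h

lemma ringKrullDim_localization_originIdeal :
    ringKrullDim (Localization.AtPrime originIdeal) = 2 := by
  rw [IsLocalization.AtPrime.ringKrullDim_eq_height originIdeal (Localization.AtPrime originIdeal)]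
  refine le_antisymm ?_ (WithBot.coe_le_coe.2 two_le_height_originIdeal)
  exact (Ideal.height_le_ringKrullDim_of_ne_top Ideal.IsPrime.ne_top').trans
    ringKrullDim_chartRing_le

open TrivSqZeroExt

noncomputable def chartJet : chartRing →+* TrivSqZeroExt ℂ (Fin 3 → ℂ) :=
  Ideal.Quotient.lift _ (jetAtZero (Fin 3) ℂ) fun _ hp =>
    (Ideal.span_singleton_le_iff_mem (RingHom.ker (jetAtZero (Fin 3) ℂ))).2 (by simp [sq]) hp

lemma chartJet_comp_chartMk : chartJet.comp chartMk = (jetAtZero (Fin 3) ℂ : _ →+* _) :=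
  Ideal.Quotient.lift_comp_mk _ _ _

lemma isUnit_chartJet {r : chartRing} (hr : r ∉ originIdeal) : IsUnit (chartJet r) := by
  obtain ⟨p, rfl⟩ := chartMk_surjective r
  rw [← RingHom.comp_apply, chartJet_comp_chartMk, RingHom.coe_coe, isUnit_iff_isUnit_fst,
    fst_jetAtZero, isUnit_iff_ne_zero]
  refine fun hp => hr ?_
  rw [originIdeal_eq_map]
  exact Ideal.mem_map_of_mem _ (mem_idealOfVars_iff.2 hp)

noncomputable def localJet :
    Localization.AtPrime originIdeal →+* TrivSqZeroExt ℂ (Fin 3 → ℂ) :=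
  IsLocalization.lift (M := originIdeal.primeCompl) fun r => isUnit_chartJet r.2

lemma map_maximalIdeal_localJet :
    (maximalIdeal (Localization.AtPrime originIdeal)).map localJet =
      Ideal.span (Set.range fun i => inr (Pi.basisFun ℂ (Fin 3) i)) := by
  rw [← Localization.AtPrime.map_eq_maximalIdeal, Ideal.map_map, localJet,
    IsLocalization.lift_comp, originIdeal_eq_map, Ideal.map_map, chartJet_comp_chartMk,
    idealOfVars, Ideal.map_span, ← Set.range_comp]
  congr 1
  ext
  simp

theorem not_exists_maximalIdeal_eq_span_pair :
    ¬ ∃ x y : Localization.AtPrime originIdeal,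
      maximalIdeal (Localization.AtPrime originIdeal) = Ideal.span {x, y} := by
  rintro ⟨x, y, hxy⟩
  classical
  set s : Finset (TrivSqZeroExt ℂ (Fin 3 → ℂ)) := {localJet x, localJet y}
  have hs : Ideal.span (s : Set (TrivSqZeroExt ℂ (Fin 3 → ℂ))) =
      Ideal.span (Set.range fun i => inr (Pi.basisFun ℂ (Fin 3) i)) := by
    rw [← map_maximalIdeal_localJet, hxy, Ideal.map_span]
    simp [s, Set.image_pair]
  have hfst : ∀ z ∈ s, fst z = 0 := fun z hz =>
    fst_eq_zero_of_mem_ideal_span (by simp) (hs ▸ Ideal.subset_span hz)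
  have h3 := card_le_card_of_inr_mem_ideal_span (Pi.basisFun ℂ (Fin 3)) s hfst
    fun i => hs ▸ Ideal.subset_span ⟨i, rfl⟩
  have h2 : s.card ≤ 2 := Finset.card_le_two
  rw [Fintype.card_fin] at h3
  omega

/-- the ideal `(c,a,k)` of `R = ℂ[c,a,k]/(ck − ca²)` is maximal, and the
localization of `R` at it is a Noetherian local ring of Krull dimension 2 whose maximal
ideal cannot be generated by 2 elements; in particular this local ring is not regular. -/
theorem chart_localization_not_regular :
    originIdeal.IsMaximal ∧
    ∀ hpr : originIdeal.IsPrime,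
      haveI : originIdeal.IsPrime := hpr
      IsNoetherianRing (Localization.AtPrime originIdeal) ∧
      IsLocalRing (Localization.AtPrime originIdeal) ∧
      ringKrullDim (Localization.AtPrime originIdeal) = 2 ∧
      ¬ ∃ x y : Localization.AtPrime originIdeal,
          IsLocalRing.maximalIdeal (Localization.AtPrime originIdeal) =
            Ideal.span {x, y} :=
  ⟨originIdeal_isMaximal, fun _ => ⟨inferInstance, inferInstance,
    ringKrullDim_localization_originIdeal, not_exists_maximalIdeal_eq_span_pair⟩⟩
end
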